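/- arXiv:2401.10923 — 5 statements merged into one kernel-verified Lean document; each statement's English description precedes it below -/
import Mathlib

section
/- For a symmetric positive definite matrix H with smallest eigenvalue λ_min(H) > 0, and any square matrix B of the same size, the Frobenius norm satisfies ‖HB + BH‖_F ≥ 2 λ_min(H) ‖B‖_F. -/
open Matrix

noncomputable def S {d : ℕ} (M : Matrix (Fin d) (Fin d) ℝ) : ℝ := ∑ i, ∑ j, (M i j)^2

lemma S_eq_trace {d : ℕ} (M : Matrix (Fin d) (Fin d) ℝ) : S M = trace (Mᵀ * M) := by
  rw [Matrix.trace]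
  simp only [Matrix.diag_apply, Matrix.mul_apply, Matrix.transpose_apply]
  rw [S, Finset.sum_comm]
  simp [sq]

lemma S_conj {d : ℕ} (U M : Matrix (Fin d) (Fin d) ℝ) (hU : U ∈ Matrix.unitaryGroup (Fin d) ℝ) :
    S (star U * M * U) = S M := by
  have h1 : U * star U = 1 := (Matrix.mem_unitaryGroup_iff).mp hU
  have h2 : star U * U = 1 := (Matrix.mem_unitaryGroup_iff').mp hU
  rw [S_eq_trace, S_eq_trace]
  have : (star U * M * U)ᵀ = Uᵀ * Mᵀ * (star U)ᵀ := by
    simp [Matrix.transpose_mul, mul_assoc]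
  rw [this]
  have hstar : star U = Uᵀ := rfl
  rw [← hstar]
  calc trace (star U * Mᵀ * (star U)ᵀ * (star U * M * U))
      = trace (star U * (Mᵀ * M) * U) := by
        rw [show (star U)ᵀ = U from ?_]
        · rw [show star U * Mᵀ * U * (star U * M * U) = star U * (Mᵀ * (U * star U) * M) * U by
            noncomm_ring]
          rw [h1, Matrix.mul_one]
        · ext i j; simp [Matrix.transpose_apply, Matrix.star_apply]
    _ = trace (Mᵀ * M) := by
        rw [Matrix.trace_mul_comm, ← mul_assoc, h1, Matrix.one_mul]

/-- Frobenius norm of a real square matrix. -/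
noncomputable def frobNorm {d : ℕ} (M : Matrix (Fin d) (Fin d) ℝ) : ℝ :=
  Real.sqrt (∑ i, ∑ j, (M i j)^2)

/-- For a symmetric positive definite matrix `H` with smallest eigenvalue `λ_min(H)`,
and any square matrix `B`, `‖HB + BH‖_F ≥ 2 λ_min(H) ‖B‖_F`. -/
theorem stmt0 {d : ℕ} (hd : 0 < d) (H B : Matrix (Fin d) (Fin d) ℝ)
    (hH : H.IsHermitian) (hPD : H.PosDef) :
    2 * (Finset.univ.inf' (Finset.univ_nonempty_iff.mpr (Fin.pos_iff_nonempty.mp hd))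
          hH.eigenvalues) * frobNorm B ≤ frobNorm (H * B + B * H) := by
  set ne : Finset.univ.Nonempty := Finset.univ_nonempty_iff.mpr (Fin.pos_iff_nonempty.mp hd)
  set μ : ℝ := Finset.univ.inf' ne hH.eigenvalues with hμdef
  have hμpos : 0 < μ := by
    obtain ⟨i, _, hi⟩ := Finset.exists_mem_eq_inf' ne hH.eigenvalues
    rw [hμdef, hi]
    exact hPD.eigenvalues_pos i
  have hμle : ∀ i, μ ≤ hH.eigenvalues i := fun i => Finset.inf'_le _ (Finset.mem_univ i)
  set U : Matrix (Fin d) (Fin d) ℝ := (hH.eigenvectorUnitary : Matrix (Fin d) (Fin d) ℝ)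
  have hUmem : U ∈ Matrix.unitaryGroup (Fin d) ℝ := hH.eigenvectorUnitary.2
  have h1 : U * star U = 1 := (Matrix.mem_unitaryGroup_iff).mp hUmem
  set D : Matrix (Fin d) (Fin d) ℝ := diagonal hH.eigenvalues with hDdef
  have hdiag : star U * H * U = D := by
    have := hH.conjStarAlgAut_star_eigenvectorUnitary
    simpa using this
  set C : Matrix (Fin d) (Fin d) ℝ := star U * B * U with hCdef
  have hkey : star U * (H * B + B * H) * U = D * C + C * D := by
    rw [← hdiag, hCdef]
    noncomm_ring
    rw [show star U * (H * (B * U)) = star U * H * (U * star U) * (B * U) by rw [h1]; noncomm_ring,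
        show star U * (B * (H * U)) = star U * B * (U * star U) * (H * U) by rw [h1]; noncomm_ring]
    noncomm_ring
  have hSB : S C = S B := S_conj U B hUmem
  have hS2 : S (D * C + C * D) = S (H * B + B * H) := by
    rw [← hkey]; exact S_conj U _ hUmem
  have hentry : ∀ i j, (D * C + C * D) i j = (hH.eigenvalues i + hH.eigenvalues j) * C i j := by
    intro i j
    simp [hDdef, Matrix.add_apply, Matrix.diagonal_mul, Matrix.mul_diagonal, add_mul, mul_comm]
  have hineq : (2 * μ)^2 * S C ≤ S (D * C + C * D) := by
    rw [S, S, Finset.mul_sum]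
    refine Finset.sum_le_sum fun i _ => ?_
    rw [Finset.mul_sum]
    refine Finset.sum_le_sum fun j _ => ?_
    rw [hentry i j, mul_pow]
    have h2 : 2 * μ ≤ hH.eigenvalues i + hH.eigenvalues j := by
      have := add_le_add (hμle i) (hμle j); linarith
    have h0 : (0:ℝ) ≤ 2 * μ := by positivity
    nlinarith [sq_nonneg (C i j), sq_nonneg ((hH.eigenvalues i + hH.eigenvalues j - 2*μ) * C i j)]
  have hSnonneg : 0 ≤ S C := Finset.sum_nonneg fun i _ => Finset.sum_nonneg fun j _ => sq_nonneg _
  have : frobNorm B = Real.sqrt (S B) := rfl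
  rw [this, show frobNorm (H * B + B * H) = Real.sqrt (S (H * B + B * H)) from rfl,
      ← hSB, ← hS2]
  calc 2 * μ * Real.sqrt (S C) = Real.sqrt ((2 * μ)^2 * S C) := by
        rw [Real.sqrt_mul (sq_nonneg _), Real.sqrt_sq (by positivity)]
    _ ≤ _ := Real.sqrt_le_sqrt hineq
end

section
/- Let (γ_n) and (β_n) be positive sequences with γ_n β_n ≤ 1 for all n. Then for every n ≥ 1, the sum Σ_{k=1}^n γ_k Π_{j=k+1}^n (1 − γ_j β_j)² ≥ (1/(2β_n)) Σ_{k=1}^n (Π_{j=k+1}^n (1−γ_jβ_j)² − Π_{j=k}^n (1−γ_jβ_j)²), provided (1/β_n) is nonincreasing, and consequently the sum is at least (1 − (1−γ_1β_1)²)/(2β_n). -/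
open Finset

/-- Let `(γ_n)` and `(β_n)` be positive sequences with `γ_n β_n ≤ 1` and `(β_n)`
nondecreasing (so `1/β_n` is nonincreasing).  Then for every `n ≥ 1`,
`Σ_{k=1}^n γ_k Π_{j=k+1}^n (1 − γ_j β_j)²
  ≥ (1/(2β_n)) Σ_{k=1}^n (Π_{j=k+1}^n (1−γ_jβ_j)² − Π_{j=k}^n (1−γ_jβ_j)²)`,
and consequently the sum is at least `(1 − (1−γ_1β_1)²)/(2β_n)`. -/
theorem stmt6 (γ β : ℕ → ℝ) (hγ : ∀ n, 0 < γ n) (hβ : ∀ n, 0 < β n)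
    (hγβ : ∀ n, γ n * β n ≤ 1) (hmono : Monotone β) (n : ℕ) (hn : 1 ≤ n) :
    (1 / (2 * β n)) * ∑ k ∈ Finset.Icc 1 n,
        ((∏ j ∈ Finset.Icc (k+1) n, (1 - γ j * β j)^2)
          - ∏ j ∈ Finset.Icc k n, (1 - γ j * β j)^2)
      ≤ ∑ k ∈ Finset.Icc 1 n, γ k * ∏ j ∈ Finset.Icc (k+1) n, (1 - γ j * β j)^2
    ∧ (1 - (1 - γ 1 * β 1)^2) / (2 * β n)
      ≤ ∑ k ∈ Finset.Icc 1 n, γ k * ∏ j ∈ Finset.Icc (k+1) n, (1 - γ j * β j)^2 := by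
  set P : ℕ → ℝ := fun k => ∏ j ∈ Finset.Icc k n, (1 - γ j * β j)^2 with hP
  have hPnn : ∀ k, 0 ≤ P k := fun k => Finset.prod_nonneg (fun j _ => sq_nonneg _)
  have hPle1 : ∀ k, P k ≤ 1 := by
    intro k
    apply Finset.prod_le_one (fun j _ => sq_nonneg _)
    intro j _
    have h1 := hγβ j
    have h2 := mul_pos (hγ j) (hβ j)
    nlinarith
  have hsplit : ∀ k, k ≤ n → P k = (1 - γ k * β k)^2 * P (k+1) := by
    intro k hk
    have : Finset.Icc k n = insert k (Finset.Icc (k+1) n) := by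
      rw [Finset.Icc_add_one_left_eq_Ioc, Finset.Ioc_insert_left hk]
    rw [hP]
    simp only
    rw [this, Finset.prod_insert (by simp)]
  have hbn : 0 < β n := hβ n
  -- part 1
  have h1 : (1 / (2 * β n)) * ∑ k ∈ Finset.Icc 1 n, (P (k+1) - P k)
      ≤ ∑ k ∈ Finset.Icc 1 n, γ k * P (k+1) := by
    rw [Finset.mul_sum]
    apply Finset.sum_le_sum
    intro k hk
    have hkn : k ≤ n := (Finset.mem_Icc.mp hk).2
    rw [hsplit k hkn]
    have hx : P (k+1) - (1 - γ k * β k)^2 * P (k+1) = P (k+1) * (γ k * β k * (2 - γ k * β k)) := by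
      ring
    rw [hx]
    have hβk : β k ≤ β n := hmono hkn
    have hγk := hγ k
    have hβk0 := hβ k
    have hγβk := hγβ k
    have hPk := hPnn (k+1)
    rw [div_mul_eq_mul_div, one_mul, div_le_iff₀ (by linarith)]
    nlinarith [mul_nonneg (mul_nonneg hPk hγk.le) (sub_nonneg.mpr hβk),
      mul_nonneg hPk (sq_nonneg (γ k * β k))]
  -- telescoping
  have htel : ∀ m : ℕ, ∑ k ∈ Finset.Icc 1 m, (P (k+1) - P k) = P (m+1) - P 1 := by
    intro m
    induction m with
    | zero => simp
    | succ m ih =>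
      rw [Finset.sum_Icc_succ_top (by omega), ih]
      ring
  have hPn1 : P (n+1) = 1 := by
    rw [hP]; simp
  have hP1 : P 1 ≤ (1 - γ 1 * β 1)^2 := by
    rw [hsplit 1 hn]
    nlinarith [hPle1 2, hPnn 2, sq_nonneg (1 - γ 1 * β 1)]
  constructor
  · exact h1
  · calc (1 - (1 - γ 1 * β 1)^2) / (2 * β n)
        ≤ (1 / (2 * β n)) * ∑ k ∈ Finset.Icc 1 n, (P (k+1) - P k) := by
          rw [htel n, hPn1, div_eq_mul_one_div, mul_comm]
          apply mul_le_mul_of_nonneg_left (by linarith) (by positivity)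
      _ ≤ _ := h1
end

section
/- Deterministic stability lemma: Let (J_n), (K_n), (r_n) be sequences of nonnegative random variables and c > 0 a constant such that r_n → 0 almost surely and J_{n+1} = (1 − c·γ̃_{n+1})J_n + γ̃_{n+1} r_n (J_n + K_n), where γ̃_n = c_γ̃ n^{−γ̃} with 1/2 < γ̃ < 1, c_γ̃ > 0. If K_n = O(v_n) a.s. with v_n = c_v n^v (ln n)^b, v ∈ ℝ, b ≥ 0, then J_n = O(v_n) almost surely. -/
open MeasureTheory Filter

lemma bern_neg {t p : ℝ} (ht : 0 ≤ t) (hp : p ≤ 0) : 1 + p * t ≤ (1 + t) ^ p := by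
  have h1 : (0:ℝ) < 1 + t := by linarith
  rw [Real.rpow_def_of_pos h1]
  have hlog : Real.log (1 + t) ≤ t := by
    have := Real.log_le_sub_one_of_pos h1
    linarith
  have h2 : p * t ≤ p * Real.log (1 + t) := by
    nlinarith [Real.log_nonneg (by linarith : (1:ℝ) ≤ 1 + t)]
  calc 1 + p * t ≤ 1 + p * Real.log (1 + t) := by linarith
    _ ≤ Real.exp (Real.log (1 + t) * p) := by
        rw [mul_comm]
        linarith [Real.add_one_le_exp (Real.log (1 + t) * p)]

lemma vratio {cv v b : ℝ} (hcv : 0 < cv) (hb : 0 ≤ b) {n : ℕ} (hn : 2 ≤ n) :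
    (1 - |v| / n) * (cv * (n:ℝ) ^ v * Real.log n ^ b)
      ≤ cv * ((n:ℝ) + 1) ^ v * Real.log ((n:ℝ) + 1) ^ b := by
  have hx : (2:ℝ) ≤ (n:ℝ) := by exact_mod_cast hn
  have hx0 : (0:ℝ) < n := by linarith
  have hlog0 : 0 < Real.log n := Real.log_pos (by linarith)
  have hrhs : 0 ≤ cv * ((n:ℝ) + 1) ^ v * Real.log ((n:ℝ) + 1) ^ b := by
    have := Real.log_pos (show (1:ℝ) < (n:ℝ)+1 by linarith)
    positivity
  rcases le_or_gt (1 - |v| / n) 0 with h | h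
  · have : 0 ≤ cv * (n:ℝ) ^ v * Real.log n ^ b := by positivity
    nlinarith
  · have hlogle : Real.log n ^ b ≤ Real.log ((n:ℝ)+1) ^ b :=
      Real.rpow_le_rpow hlog0.le (Real.log_le_log hx0 (by linarith)) hb
    have hpow : (1 - |v| / n) * (n:ℝ) ^ v ≤ ((n:ℝ) + 1) ^ v := by
      have key : 1 - |v| / n ≤ (1 + 1 / (n:ℝ)) ^ v := by
        rcases le_or_gt 0 v with hv | hv
        · have h1 : (1:ℝ) ≤ (1 + 1/(n:ℝ)) ^ v :=
            Real.one_le_rpow (by linarith [one_div_pos.mpr hx0]) hv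
          have : 0 ≤ |v| / (n:ℝ) := div_nonneg (abs_nonneg v) hx0.le
          linarith
        · have := bern_neg (t := 1/(n:ℝ)) (p := v) (by positivity) hv.le
          have habs : |v| = -v := abs_of_neg hv
          rw [habs]
          calc 1 - -v / n = 1 + v * (1/(n:ℝ)) := by ring
            _ ≤ (1 + 1/(n:ℝ)) ^ v := this
      have hmul : ((n:ℝ) + 1) ^ v = (n:ℝ) ^ v * (1 + 1/(n:ℝ)) ^ v := by
        rw [← Real.mul_rpow hx0.le (by positivity)]
        congr 1
        field_simp
      rw [hmul]
      have hnp : (0:ℝ) < (n:ℝ) ^ v := Real.rpow_pos_of_pos hx0 v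
      calc (1 - |v| / n) * (n:ℝ) ^ v ≤ (1 + 1/(n:ℝ)) ^ v * (n:ℝ) ^ v := by
            nlinarith
        _ = (n:ℝ) ^ v * (1 + 1/(n:ℝ)) ^ v := by ring
    have hnp : (0:ℝ) < (n:ℝ) ^ v := Real.rpow_pos_of_pos hx0 v
    have hlb : (0:ℝ) ≤ Real.log n ^ b := by positivity
    calc (1 - |v| / n) * (cv * (n:ℝ) ^ v * Real.log n ^ b)
        = cv * ((1 - |v|/n) * (n:ℝ)^v) * Real.log n ^ b := by ring
      _ ≤ cv * (((n:ℝ)+1) ^ v) * Real.log n ^ b := by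
          apply mul_le_mul_of_nonneg_right _ hlb
          exact mul_le_mul_of_nonneg_left hpow hcv.le
      _ ≤ cv * ((n:ℝ)+1) ^ v * Real.log ((n:ℝ)+1) ^ b := by
          apply mul_le_mul_of_nonneg_left hlogle (by positivity)

lemma tendsto_aux (γt : ℝ) (hγ : γt < 1) :
    Tendsto (fun n : ℕ => ((n:ℝ) + 1) ^ (γt - 1)) atTop (nhds 0) := by
  have h1 : Tendsto (fun x : ℝ => x ^ (-(1 - γt))) atTop (nhds 0) :=
    tendsto_rpow_neg_atTop (by linarith)
  have h2 : Tendsto (fun n : ℕ => (n:ℝ) + 1) atTop atTop :=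
    tendsto_atTop_add_const_right _ 1 tendsto_natCast_atTop_atTop
  have := h1.comp h2
  simpa [Function.comp_def, neg_sub] using this

lemma tendsto_aux2 (cγ γt : ℝ) (hγ : 0 < γt) :
    Tendsto (fun n : ℕ => cγ * ((n:ℝ) + 1) ^ (-γt)) atTop (nhds 0) := by
  have h := tendsto_aux (1 - γt) (by linarith)
  have : Tendsto (fun n : ℕ => cγ * ((n:ℝ) + 1) ^ ((1 - γt) - 1)) atTop (nhds (cγ * 0)) :=
    (tendsto_const_nhds).mul h
  simpa using this.congr (fun n => by norm_num)

lemma tendsto_aux3 (v γt : ℝ) (hγ : γt < 1) :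
    Tendsto (fun n : ℕ => |v| / (n:ℝ) * ((n:ℝ) + 1) ^ γt) atTop (nhds 0) := by
  have h1 := tendsto_aux γt hγ
  have h2 : Tendsto (fun n : ℕ => (1 : ℝ) + 1/(n:ℝ)) atTop (nhds 1) := by
    simpa using (tendsto_const_nhds (x := (1:ℝ))).add tendsto_one_div_atTop_nhds_zero_nat
  have h3 : Tendsto (fun n : ℕ => |v| * (((n:ℝ)+1) ^ (γt-1)) * (1 + 1/(n:ℝ)))
      atTop (nhds (|v| * 0 * 1)) := (tendsto_const_nhds.mul h1).mul h2
  have heq : (fun n : ℕ => |v| * (((n:ℝ)+1) ^ (γt-1)) * (1 + 1/(n:ℝ)))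
      =ᶠ[atTop] (fun n : ℕ => |v| / (n:ℝ) * ((n:ℝ) + 1) ^ γt) := by
    filter_upwards [eventually_ge_atTop 1] with n hn
    have hn0 : (0:ℝ) < n := by exact_mod_cast Nat.lt_of_lt_of_le Nat.zero_lt_one hn
    have hp : ((n:ℝ)+1) ^ (γt-1) = ((n:ℝ)+1) ^ γt / ((n:ℝ)+1) := by
      rw [Real.rpow_sub (by positivity), Real.rpow_one]
    rw [hp]
    field_simp
  simpa using h3.congr' heq


set_option maxHeartbeats 1000000

/-- Deterministic stability lemma: if `J_{n+1} = (1 − c γ̃_{n+1}) J_n + γ̃_{n+1} r_n (J_n + K_n)`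
with `γ̃_n = c_γ̃ n^{−γ̃}`, `1/2 < γ̃ < 1`, `r_n → 0` a.s. and `K_n = O(v_n)` a.s. where
`v_n = c_v n^v (ln n)^b`, then `J_n = O(v_n)` almost surely. -/
theorem stmt8 {Ω : Type*} [MeasurableSpace Ω] (μ : Measure Ω) [IsProbabilityMeasure μ]
    (J K r : ℕ → Ω → ℝ) (c cγ γt cv v b : ℝ)
    (hc : 0 < c) (hcγ : 0 < cγ) (hγlow : 1/2 < γt) (hγhigh : γt < 1)
    (hcv : 0 < cv) (hb : 0 ≤ b)
    (hJ : ∀ n ω, 0 ≤ J n ω) (hK : ∀ n ω, 0 ≤ K n ω) (hr : ∀ n ω, 0 ≤ r n ω)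
    (hr0 : ∀ᵐ ω ∂μ, Tendsto (fun n => r n ω) atTop (nhds 0))
    (hrec : ∀ n ω, J (n+1) ω
      = (1 - c * (cγ * ((n+1 : ℕ) : ℝ) ^ (-γt))) * J n ω
        + (cγ * ((n+1 : ℕ) : ℝ) ^ (-γt)) * r n ω * (J n ω + K n ω))
    (hKO : ∀ᵐ ω ∂μ, ∃ C : ℝ, ∀ᶠ n : ℕ in atTop,
      K n ω ≤ C * (cv * ((n : ℝ) ^ v) * (Real.log n) ^ b)) :
    ∀ᵐ ω ∂μ, ∃ C : ℝ, ∀ᶠ n : ℕ in atTop,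
      J n ω ≤ C * (cv * ((n : ℝ) ^ v) * (Real.log n) ^ b) := by
  have hγ0 : 0 < γt := by linarith
  -- the step size at n+1
  set g : ℕ → ℝ := fun n => cγ * ((n:ℝ) + 1) ^ (-γt) with hgdef
  have hg : ∀ n : ℕ, 0 < g n := fun n => by
    have : (0:ℝ) < (n:ℝ) + 1 := by positivity
    positivity
  -- value function
  set vf : ℕ → ℝ := fun n => cv * ((n:ℝ) ^ v) * (Real.log n) ^ b with hvfdef
  have hvfpos : ∀ n : ℕ, 2 ≤ n → 0 < vf n := by
    intro n hn
    have hx : (2:ℝ) ≤ (n:ℝ) := by exact_mod_cast hn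
    have h1 : (0:ℝ) < (n:ℝ) := by linarith
    have h2 : 0 < Real.log n := Real.log_pos (by linarith)
    simp only [hvfdef]
    positivity
  -- eventual deterministic conditions
  have E1 : ∀ᶠ n : ℕ in atTop, |v| / (n:ℝ) ≤ (c/4) * g n := by
    have ht := tendsto_aux3 v γt hγhigh
    have hpos : (0:ℝ) < (c/4) * cγ := by positivity
    filter_upwards [ht.eventually_lt_const hpos, eventually_ge_atTop 1] with n hlt hn
    have hn1 : (0:ℝ) < (n:ℝ) + 1 := by positivity
    have hpowpos : (0:ℝ) < ((n:ℝ)+1) ^ γt := Real.rpow_pos_of_pos hn1 γt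
    have hneg : ((n:ℝ)+1) ^ (-γt) = (((n:ℝ)+1) ^ γt)⁻¹ := Real.rpow_neg hn1.le γt
    have := mul_le_mul_of_nonneg_right hlt.le (le_of_lt (inv_pos.mpr hpowpos))
    calc |v| / (n:ℝ) = |v| / (n:ℝ) * ((n:ℝ)+1) ^ γt * (((n:ℝ)+1) ^ γt)⁻¹ := by
          field_simp
      _ ≤ (c/4) * cγ * (((n:ℝ)+1) ^ γt)⁻¹ := this
      _ = (c/4) * g n := by simp only [hgdef]; rw [hneg]; ring
  have E2 : ∀ᶠ n : ℕ in atTop, (c/2) * g n ≤ 1 := by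
    have ht : Tendsto (fun n : ℕ => (c/2) * g n) atTop (nhds ((c/2) * 0)) :=
      tendsto_const_nhds.mul (tendsto_aux2 cγ γt hγ0)
    have := ht.eventually_lt_const (by norm_num : (c/2) * (0:ℝ) < 1)
    exact this.mono fun n h => h.le
  -- pointwise argument
  filter_upwards [hr0, hKO] with ω hrω hKω
  obtain ⟨C₀, hC₀⟩ := hKω
  set Cb : ℝ := max C₀ 1 with hCbdef
  have hCb1 : (1:ℝ) ≤ Cb := le_max_right _ _
  have hCb0 : (0:ℝ) < Cb := by linarith
  have EK : ∀ᶠ n : ℕ in atTop, K n ω ≤ Cb * vf n := by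
    filter_upwards [hC₀, eventually_ge_atTop 2] with n h1 h2
    have := hvfpos n h2
    calc K n ω ≤ C₀ * vf n := h1
      _ ≤ Cb * vf n := mul_le_mul_of_nonneg_right (le_max_left _ _) this.le
  have Er : ∀ᶠ n : ℕ in atTop, r n ω ≤ c/2 :=
    (hrω.eventually_lt_const (by positivity : (0:ℝ) < c/2)).mono fun n h => h.le
  obtain ⟨N, hN⟩ := eventually_atTop.mp
    (E1.and (E2.and (EK.and (Er.and (eventually_ge_atTop 2)))))
  have hN2 : 2 ≤ N := (hN N le_rfl).2.2.2.2
  have hvfN : 0 < vf N := hvfpos N hN2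
  set D : ℝ := max (J N ω / vf N) (2 * Cb) with hDdef
  have hD2 : 2 * Cb ≤ D := le_max_right _ _
  have hD0 : 0 ≤ D := by linarith
  have key : ∀ m : ℕ, J (N + m) ω ≤ D * vf (N + m) := by
    intro m
    induction m with
    | zero =>
      have : J N ω = J N ω / vf N * vf N := by field_simp
      rw [Nat.add_zero, this]
      exact mul_le_mul_of_nonneg_right (le_max_left _ _) hvfN.le
    | succ m ih =>
      set n : ℕ := N + m with hndef
      have hn : N ≤ n := Nat.le_add_right N m
      obtain ⟨hE1, hE2, hEK, hEr, hn2⟩ := hN n hn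
      have hgn := hg n
      have hvfn := hvfpos n hn2
      have hcast : ((n + 1 : ℕ) : ℝ) = (n:ℝ) + 1 := by push_cast; ring
      have hrecn : J (n+1) ω = (1 - c * g n) * J n ω + g n * r n ω * (J n ω + K n ω) := by
        rw [hrec n ω, hgdef]; rw [hcast]
      have h1 : J (n+1) ω ≤ (1 - (c/2) * g n) * J n ω + g n * (c/2) * K n ω := by
        rw [hrecn]
        nlinarith [mul_nonneg (mul_nonneg hgn.le (sub_nonneg.mpr hEr))
          (add_nonneg (hJ n ω) (hK n ω))]
      have hcoef : 0 ≤ 1 - (c/2) * g n := by linarith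
      have h2 : (1 - (c/2) * g n) * J n ω ≤ (1 - (c/2) * g n) * (D * vf n) :=
        mul_le_mul_of_nonneg_left ih hcoef
      have h3 : g n * (c/2) * K n ω ≤ g n * (c/2) * (Cb * vf n) :=
        mul_le_mul_of_nonneg_left hEK (by positivity)
      have hA : D * (|v| / (n:ℝ)) + (c/2) * Cb * g n ≤ D * ((c/2) * g n) := by
        have hA1 : D * (|v| / (n:ℝ)) ≤ D * ((c/4) * g n) :=
          mul_le_mul_of_nonneg_left hE1 hD0
        nlinarith [mul_le_mul_of_nonneg_right hD2 (by positivity : (0:ℝ) ≤ (c/4) * g n)]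
      have h4 : (1 - (c/2) * g n) * (D * vf n) + g n * (c/2) * (Cb * vf n)
          ≤ D * ((1 - |v| / (n:ℝ)) * vf n) := by
        have hB := mul_le_mul_of_nonneg_right hA hvfn.le
        ring_nf at hB ⊢
        linarith
      have h5 : D * ((1 - |v| / (n:ℝ)) * vf n) ≤ D * vf (n+1) := by
        apply mul_le_mul_of_nonneg_left _ hD0
        have hv := vratio (cv := cv) (v := v) (b := b) hcv hb hn2
        simp only [hvfdef]
        calc (1 - |v| / (n:ℝ)) * (cv * (n:ℝ) ^ v * Real.log n ^ b)
            ≤ cv * ((n:ℝ) + 1) ^ v * Real.log ((n:ℝ) + 1) ^ b := hv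
          _ = cv * ((n+1:ℕ):ℝ) ^ v * Real.log ((n+1:ℕ)) ^ b := by rw [hcast]
      have : N + (m + 1) = n + 1 := by omega
      rw [this]
      linarith
  refine ⟨D, ?_⟩
  rw [eventually_atTop]
  refine ⟨N, fun n hn => ?_⟩
  obtain ⟨m, rfl⟩ := Nat.exists_eq_add_of_le hn
  exact key m
end

section
/- Suppose B_{n+1} = (I_d − γ_{n+1}H) B_n (I_d − γ_{n+1}H) + γ_{n+1} r_{n+1} where H is symmetric positive definite, γ_n = c_γ n^{−γ} with γ ∈ (1/2,1), and ‖r_n‖_op = o(n^{−a/2} (ln n)^{(1+δ)/2}) a.s. for some a, δ > 0. Then ‖B_n‖_op = o(n^{−a/2}(ln n)^{(1+δ)/2}) almost surely. -/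
set_option maxHeartbeats 1000000
set_option synthInstance.maxHeartbeats 1000000

open Matrix MeasureTheory Filter Asymptotics
open scoped RealInnerProductSpace

/-- Spectral (operator) norm of a real square matrix. -/
noncomputable def opNorm {d : ℕ} (M : Matrix (Fin d) (Fin d) ℝ) : ℝ :=
  ‖(Matrix.toEuclideanCLM (𝕜 := ℝ) M : EuclideanSpace ℝ (Fin d) →L[ℝ] EuclideanSpace ℝ (Fin d))‖

lemma opNorm_nonneg {d : ℕ} (M : Matrix (Fin d) (Fin d) ℝ) : 0 ≤ opNorm M := norm_nonneg _

lemma opNorm_add_le {d : ℕ} (M N : Matrix (Fin d) (Fin d) ℝ) :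
    opNorm (M + N) ≤ opNorm M + opNorm N := by
  unfold opNorm; rw [map_add]; exact norm_add_le _ _

lemma opNorm_mul_le {d : ℕ} (M N : Matrix (Fin d) (Fin d) ℝ) :
    opNorm (M * N) ≤ opNorm M * opNorm N := by
  unfold opNorm; rw [_root_.map_mul]; exact norm_mul_le _ _

lemma opNorm_smul {d : ℕ} (c : ℝ) (M : Matrix (Fin d) (Fin d) ℝ) :
    opNorm (c • M) = |c| * opNorm M := by
  unfold opNorm; rw [_root_.map_smul]; exact (norm_smul c (Matrix.toEuclideanCLM (𝕜 := ℝ) M)).trans (by rw [Real.norm_eq_abs])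

lemma opNorm_one_sub_smul {d : ℕ} (H : Matrix (Fin d) (Fin d) ℝ) (hH : H.PosDef) :
    ∃ lam Lam : ℝ, 0 < lam ∧ lam ≤ Lam ∧
      ∀ t : ℝ, 0 ≤ t → t * Lam ≤ 1 → opNorm (1 - t • H) ≤ 1 - lam * t := by
  rcases Nat.eq_zero_or_pos d with hd | hd
  · refine ⟨1, 1, one_pos, le_refl _, fun t ht htl => ?_⟩
    subst hd
    have h0 : (Matrix.toEuclideanCLM (𝕜 := ℝ) (1 - t • H)) = 0 := Subsingleton.elim _ _
    rw [opNorm, h0]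
    simp only [norm_zero]
    linarith
  · have hne : Nonempty (Fin d) := ⟨⟨0, hd⟩⟩
    have hever : Finset.univ.Nonempty := Finset.univ_nonempty (α := Fin d)
    set b := hH.1.eigenvectorBasis with hb
    set ev := hH.1.eigenvalues with hev
    refine ⟨Finset.univ.inf' hever ev, Finset.univ.sup' hever ev, ?_, ?_, ?_⟩
    · exact (Finset.lt_inf'_iff _).mpr fun i _ => hH.eigenvalues_pos i
    · obtain ⟨i⟩ := hne
      exact le_trans (Finset.inf'_le _ (Finset.mem_univ i)) (Finset.le_sup' _ (Finset.mem_univ i))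
    set lam := Finset.univ.inf' hever ev
    set Lam := Finset.univ.sup' hever ev
    have hlam : 0 < lam := (Finset.lt_inf'_iff _).mpr fun i _ => hH.eigenvalues_pos i
    intro t ht htl
    have hlamle : ∀ i, lam ≤ ev i := fun i => Finset.inf'_le _ (Finset.mem_univ i)
    have hLamge : ∀ i, ev i ≤ Lam := fun i => Finset.le_sup' _ (Finset.mem_univ i)
    have hlamLam : lam ≤ Lam := le_trans (hlamle (Classical.arbitrary _)) (hLamge _)
    have h1 : 0 ≤ 1 - lam * t := by nlinarith [hlamle (Classical.arbitrary (Fin d))]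
    -- T on eigenbasis
    set T := Matrix.toEuclideanCLM (𝕜 := ℝ) H with hT
    have hTb : ∀ i, T (b i) = ev i • b i := by
      intro i
      apply (WithLp.equiv 2 ((Fin d) → ℝ)).injective
      change WithLp.ofLp (T (b i)) = _
      rw [Matrix.ofLp_toEuclideanCLM]
      simpa using hH.1.mulVec_eigenvectorBasis i
    have hsym : ∀ x y : EuclideanSpace ℝ (Fin d), inner ℝ (T x) y = inner ℝ x (T y) := by
      have := (Matrix.isHermitian_iff_isSymmetric.mp hH.1)
      intro x y
      have hTx : ∀ z, T z = Matrix.toEuclideanLin H z := by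
        intro z
        rw [hT, ← Matrix.coe_toEuclideanCLM_eq_toEuclideanLin]
        rfl
      rw [hTx, hTx]; exact this x y
    have hrepr : ∀ (x : EuclideanSpace ℝ (Fin d)) i,
        b.repr (T x) i = ev i * b.repr x i := by
      intro x i
      rw [OrthonormalBasis.repr_apply_apply, OrthonormalBasis.repr_apply_apply,
        ← hsym, hTb, real_inner_smul_left]
    -- the full map
    have hAx : ∀ x : EuclideanSpace ℝ (Fin d),
        (Matrix.toEuclideanCLM (𝕜 := ℝ) (1 - t • H)) x = x - t • T x := by
      intro x
      rw [map_sub, _root_.map_smul, _root_.map_one]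
      rfl
    rw [opNorm]
    refine ContinuousLinearMap.opNorm_le_bound _ h1 fun x => ?_
    have hreprA : ∀ i, b.repr ((Matrix.toEuclideanCLM (𝕜 := ℝ) (1 - t • H)) x) i
        = (1 - t * ev i) * b.repr x i := by
      intro i
      rw [hAx, map_sub, _root_.map_smul]
      have : (b.repr x - t • b.repr (T x)) i = b.repr x i - t * b.repr (T x) i := rfl
      rw [this, hrepr]
      ring
    have hnorm1 : ‖(Matrix.toEuclideanCLM (𝕜 := ℝ) (1 - t • H)) x‖
        = ‖b.repr ((Matrix.toEuclideanCLM (𝕜 := ℝ) (1 - t • H)) x)‖ :=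
      (LinearIsometryEquiv.norm_map _ _).symm
    have hnorm2 : ‖x‖ = ‖b.repr x‖ := (LinearIsometryEquiv.norm_map _ _).symm
    rw [hnorm1, hnorm2, EuclideanSpace.norm_eq, EuclideanSpace.norm_eq]
    have hsum : ∑ i, ‖b.repr ((Matrix.toEuclideanCLM (𝕜 := ℝ) (1 - t • H)) x) i‖ ^ 2
        ≤ (1 - lam * t)^2 * ∑ i, ‖b.repr x i‖ ^ 2 := by
      rw [Finset.mul_sum]
      refine Finset.sum_le_sum fun i _ => ?_
      rw [hreprA i]
      have hsq : (1 - t * ev i)^2 ≤ (1 - lam * t)^2 := by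
        have h2 : t * ev i ≤ t * Lam := mul_le_mul_of_nonneg_left (hLamge i) ht
        have h3 : t * lam ≤ t * ev i := mul_le_mul_of_nonneg_left (hlamle i) ht
        nlinarith
      rw [Real.norm_eq_abs, Real.norm_eq_abs, abs_mul, mul_pow, sq_abs, sq_abs]
      exact mul_le_mul_of_nonneg_right hsq (sq_nonneg _)
    calc Real.sqrt (∑ i, ‖b.repr ((Matrix.toEuclideanCLM (𝕜 := ℝ) (1 - t • H)) x) i‖ ^ 2)
        ≤ Real.sqrt ((1 - lam * t)^2 * ∑ i, ‖b.repr x i‖ ^ 2) := Real.sqrt_le_sqrt hsum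
      _ = (1 - lam * t) * Real.sqrt (∑ i, ‖b.repr x i‖ ^ 2) := by
          rw [Real.sqrt_mul (sq_nonneg _), Real.sqrt_sq h1]

lemma scalar_rec_tendsto_zero (u g e : ℕ → ℝ) (lam : ℝ) (hlam : 0 < lam)
    (hg0 : ∀ n, 0 ≤ g n)
    (hgsum : Tendsto (fun n => ∑ k ∈ Finset.range n, g k) atTop atTop)
    (hgsmall : ∀ᶠ n in atTop, lam * g n ≤ 1)
    (hu0 : ∀ n, 0 ≤ u n)
    (he : Tendsto e atTop (nhds 0))
    (hrec : ∀ᶠ n in atTop, u (n+1) ≤ (1 - lam * g (n+1)) * u n + g (n+1) * e (n+1)) :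
    Tendsto u atTop (nhds 0) := by
  rw [Metric.tendsto_atTop]
  intro ε hε
  have he' : ∀ᶠ n in atTop, e n ≤ lam * (ε/2) := by
    have h := Metric.tendsto_atTop.mp he (lam * (ε/2)) (by positivity)
    obtain ⟨N, hN⟩ := h
    exact eventually_atTop.mpr ⟨N, fun n hn => by
      have := hN n hn
      rw [Real.dist_eq, sub_zero] at this
      exact le_of_lt (lt_of_abs_lt this)⟩
  obtain ⟨N₁, hN₁⟩ := eventually_atTop.mp hgsmall
  obtain ⟨N₂, hN₂⟩ := eventually_atTop.mp hrec
  obtain ⟨N₃, hN₃⟩ := eventually_atTop.mp he'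
  set M := max N₁ (max N₂ N₃) with hM
  have hMN₁ : N₁ ≤ M := le_max_left _ _
  have hMN₂ : N₂ ≤ M := (le_max_left _ _).trans (le_max_right _ _)
  have hMN₃ : N₃ ≤ M := (le_max_right _ _).trans (le_max_right _ _)
  -- key one step inequality
  have hstep : ∀ n, M ≤ n → u (n+1) - ε/2 ≤ (1 - lam * g (n+1)) * (u n - ε/2) := by
    intro n hn
    have h1 : u (n+1) ≤ (1 - lam * g (n+1)) * u n + g (n+1) * e (n+1) :=
      hN₂ n (hMN₂.trans hn)
    have h2 : e (n+1) ≤ lam * (ε/2) := hN₃ (n+1) (by omega)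
    have h3 : g (n+1) * e (n+1) ≤ g (n+1) * (lam * (ε/2)) :=
      mul_le_mul_of_nonneg_left h2 (hg0 _)
    nlinarith
  set C := max (u M - ε/2) 0 with hC
  have hC0 : 0 ≤ C := le_max_right _ _
  set P : ℕ → ℝ := fun k => ∏ j ∈ Finset.range k, (1 - lam * g (M+j+1)) with hP
  have hfac : ∀ j : ℕ, 0 ≤ 1 - lam * g (M+j+1) := by
    intro j
    have := hN₁ (M+j+1) (by omega)
    linarith
  have hind : ∀ k : ℕ, u (M+k) - ε/2 ≤ P k * C := by
    intro k
    induction k with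
    | zero =>
      simp only [hP, Finset.range_zero, Finset.prod_empty, one_mul, Nat.add_zero]
      exact le_max_left _ 0
    | succ k ih =>
      have h1 : u (M+k+1) - ε/2 ≤ (1 - lam * g (M+k+1)) * (u (M+k) - ε/2) :=
        hstep (M+k) (by omega)
      have h2 : (1 - lam * g (M+k+1)) * (u (M+k) - ε/2)
          ≤ (1 - lam * g (M+k+1)) * (P k * C) :=
        mul_le_mul_of_nonneg_left ih (hfac k)
      have h3 : (1 - lam * g (M+k+1)) * (P k * C) = P (k+1) * C := by
        simp only [hP, Finset.prod_range_succ]; ring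
      have : M + (k+1) = M + k + 1 := by omega
      rw [this]
      linarith
  -- bound P by exponential
  set x : ℕ → ℝ := fun k => ∑ j ∈ Finset.range k, g (M+j+1) with hx
  have hPQ : ∀ k, P k ≤ Real.exp (-lam * x k) := by
    intro k
    have : Real.exp (-lam * x k) = ∏ j ∈ Finset.range k, Real.exp (-(lam * g (M+j+1))) := by
      rw [← Real.exp_sum]
      congr 1
      rw [hx, Finset.mul_sum]
      congr 1; funext j; ring
    rw [this, hP]
    refine Finset.prod_le_prod (fun j _ => hfac j) (fun j _ => ?_)
    have := Real.add_one_le_exp (-(lam * g (M+j+1)))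
    linarith
  -- x tends to atTop
  have hxt : Tendsto x atTop atTop := by
    have hxx : ∀ k, x k = (∑ i ∈ Finset.range (M+1+k), g i) - ∑ i ∈ Finset.range (M+1), g i := by
      intro k
      rw [hx, ← Finset.sum_Ico_eq_sub _ (by omega), Finset.sum_Ico_eq_sum_range]
      simp only [Nat.add_sub_cancel_left]
      apply Finset.sum_congr rfl
      intro j _
      congr 1
      omega
    have h1 : Tendsto (fun k => ∑ i ∈ Finset.range (M+1+k), g i) atTop atTop := by
      refine (hgsum.comp (tendsto_add_atTop_nat (M+1))).congr fun k => ?_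
      simp only [Function.comp_apply]
      congr 2
      omega
    have := tendsto_atTop_add_const_right atTop (-(∑ i ∈ Finset.range (M+1), g i)) h1
    refine this.congr fun k => ?_
    rw [hxx k]; ring
  have hQ0 : Tendsto (fun k => Real.exp (-lam * x k) * C) atTop (nhds 0) := by
    have h1 : Tendsto (fun k => -lam * x k) atTop atBot :=
      Tendsto.const_mul_atTop_of_neg (by linarith) hxt
    have h2 : Tendsto (fun k => Real.exp (-lam * x k)) atTop (nhds 0) :=
      Real.tendsto_exp_atBot.comp h1
    simpa using h2.mul_const C
  have hev : ∀ᶠ k in atTop, Real.exp (-lam * x k) * C < ε/2 := by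
    have := Metric.tendsto_atTop.mp hQ0 (ε/2) (by positivity)
    obtain ⟨K, hK⟩ := this
    refine eventually_atTop.mpr ⟨K, fun k hk => ?_⟩
    have := hK k hk
    rw [Real.dist_eq, sub_zero] at this
    exact lt_of_abs_lt this
  obtain ⟨K, hK⟩ := eventually_atTop.mp hev
  refine ⟨M + K, fun n hn => ?_⟩
  have hnM : M ≤ n := by omega
  set k := n - M with hk
  have hkK : K ≤ k := by omega
  have hnk : n = M + k := by omega
  have h1 : u n - ε/2 ≤ P k * C := by rw [hnk]; exact hind k
  have h2 : P k * C ≤ Real.exp (-lam * x k) * C :=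
    mul_le_mul_of_nonneg_right (hPQ k) hC0
  have h3 : Real.exp (-lam * x k) * C < ε/2 := hK k hkK
  rw [Real.dist_eq, sub_zero, abs_of_nonneg (hu0 n)]
  linarith

noncomputable def wfun (a δ : ℝ) (n : ℕ) : ℝ :=
  ((n : ℝ) ^ (-(a/2))) * (Real.log n) ^ ((1+δ)/2)

lemma wfun_nonneg (a δ : ℝ) (n : ℕ) : 0 ≤ wfun a δ n := by
  unfold wfun
  have h2 : (0:ℝ) ≤ Real.log n := by
    rcases Nat.lt_or_ge n 1 with h | h
    · interval_cases n; simp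
    · exact Real.log_nonneg (by exact_mod_cast h)
  have h1 : (0:ℝ) ≤ (n:ℝ) := Nat.cast_nonneg n
  positivity

lemma wfun_pos (a δ : ℝ) {n : ℕ} (hn : 2 ≤ n) : 0 < wfun a δ n := by
  unfold wfun
  have h1 : (1:ℝ) < (n:ℝ) := by exact_mod_cast Nat.lt_of_lt_of_le Nat.one_lt_two hn
  have h2 : (0:ℝ) < Real.log n := Real.log_pos h1
  have h3 : (0:ℝ) < (n:ℝ) := by linarith
  exact mul_pos (Real.rpow_pos_of_pos h3 _) (Real.rpow_pos_of_pos h2 _)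

lemma ratio_bound (a δ : ℝ) (ha : 0 < a) (hδ : 0 < δ) :
    ∀ᶠ n : ℕ in atTop, wfun a δ n / wfun a δ (n+1) ≤ 1 + a / n := by
  have hq : 0 < a/2 := by linarith
  have hp : 0 < (1+δ)/2 := by linarith
  filter_upwards [eventually_ge_atTop 2, eventually_ge_atTop (Nat.ceil (a/2))]
    with n hn2 hna
  have hn1 : (1:ℝ) < (n:ℝ) := by exact_mod_cast Nat.lt_of_lt_of_le Nat.one_lt_two hn2
  have hnpos : (0:ℝ) < (n:ℝ) := by linarith
  have hn1pos : (0:ℝ) < (n:ℝ)+1 := by linarith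
  have hLn : 0 < Real.log n := Real.log_pos hn1
  have hLn1 : 0 < Real.log ((n:ℝ)+1) := Real.log_pos (by linarith)
  have hcast : ((n+1:ℕ):ℝ) = (n:ℝ)+1 := by push_cast; ring
  have hLmono : Real.log (n:ℝ) ≤ Real.log ((n:ℝ)+1) := Real.log_le_log hnpos (by linarith)
  have hsplit : wfun a δ n / wfun a δ (n+1)
      = ((n:ℝ)^(-(a/2)) / ((n:ℝ)+1)^(-(a/2)))
        * ((Real.log n)^((1+δ)/2) / (Real.log ((n:ℝ)+1))^((1+δ)/2)) := by
    unfold wfun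
    rw [hcast]
    ring
  have h2le1 : (Real.log n)^((1+δ)/2) / (Real.log ((n:ℝ)+1))^((1+δ)/2) ≤ 1 := by
    rw [div_le_one (Real.rpow_pos_of_pos hLn1 _)]
    exact Real.rpow_le_rpow hLn.le hLmono hp.le
  have hfa : (n:ℝ)^(-(a/2)) / ((n:ℝ)+1)^(-(a/2)) = (((n:ℝ)+1)/(n:ℝ))^(a/2) := by
    rw [Real.rpow_neg hnpos.le, Real.rpow_neg hn1pos.le,
      Real.div_rpow (by linarith) hnpos.le]
    field_simp
  have hfa2 : (((n:ℝ)+1)/(n:ℝ))^(a/2) ≤ 1 + a/n := by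
    have hx : ((n:ℝ)+1)/(n:ℝ) = 1 + 1/n := by field_simp
    have hxpos : (0:ℝ) < 1 + 1/(n:ℝ) := by positivity
    have hlog : Real.log (1 + 1/(n:ℝ)) ≤ 1/(n:ℝ) := by
      have := Real.log_le_sub_one_of_pos hxpos
      linarith
    have h1 : (((n:ℝ)+1)/(n:ℝ))^(a/2) = Real.exp (Real.log (1+1/(n:ℝ)) * (a/2)) := by
      rw [hx, Real.rpow_def_of_pos hxpos]
    have h2 : Real.exp (Real.log (1+1/(n:ℝ)) * (a/2)) ≤ Real.exp ((a/2)/(n:ℝ)) := by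
      apply Real.exp_le_exp.mpr
      calc Real.log (1+1/(n:ℝ)) * (a/2) ≤ (1/(n:ℝ)) * (a/2) :=
            mul_le_mul_of_nonneg_right hlog (le_of_lt hq)
        _ = (a/2)/(n:ℝ) := by ring
    have hq1 : (a/2)/(n:ℝ) ≤ 1 := by
      rw [div_le_one hnpos]
      calc a/2 ≤ (Nat.ceil (a/2) : ℝ) := Nat.le_ceil _
        _ ≤ (n:ℝ) := by exact_mod_cast hna
    have hq0 : 0 ≤ (a/2)/(n:ℝ) := by positivity
    have h3 : Real.exp ((a/2)/(n:ℝ)) ≤ 1 + 2*((a/2)/(n:ℝ)) := by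
      have hb := Real.exp_bound' hq0 hq1 (n := 1) one_pos
      norm_num [Finset.sum_range_succ] at hb
      linarith
    have h4 : 2*((a/2)/(n:ℝ)) = a/(n:ℝ) := by ring
    calc (((n:ℝ)+1)/(n:ℝ))^(a/2) ≤ 1 + 2*((a/2)/(n:ℝ)) := by rw [h1]; exact h2.trans h3
      _ = 1 + a/n := by rw [h4]
  calc wfun a δ n / wfun a δ (n+1)
      = _ := hsplit
    _ ≤ ((((n:ℝ)+1)/(n:ℝ))^(a/2)) * 1 := by
        rw [hfa]
        refine mul_le_mul_of_nonneg_left h2le1 (Real.rpow_nonneg (by positivity) _)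
    _ ≤ 1 + a/n := by rw [mul_one]; exact hfa2

lemma ev_succ {P : ℕ → Prop} (h : ∀ᶠ n in atTop, P n) : ∀ᶠ n in atTop, P (n+1) := by
  obtain ⟨N, hN⟩ := eventually_atTop.mp h
  exact eventually_atTop.mpr ⟨N, fun n hn => hN (n+1) (by omega)⟩

lemma main_det {d : ℕ} (H : Matrix (Fin d) (Fin d) ℝ) (hH : H.PosDef)
    (B r : ℕ → Matrix (Fin d) (Fin d) ℝ)
    (cγ γ a δ : ℝ) (hcγ : 0 < cγ) (hγlow : 1/2 < γ) (hγhigh : γ < 1)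
    (ha : 0 < a) (hδ : 0 < δ)
    (hrec : ∀ n, B (n+1)
      = (1 - (cγ * ((n+1 : ℕ) : ℝ) ^ (-γ)) • H) * B n * (1 - (cγ * ((n+1 : ℕ) : ℝ) ^ (-γ)) • H)
        + (cγ * ((n+1 : ℕ) : ℝ) ^ (-γ)) • r (n+1))
    (hr : (fun n : ℕ => opNorm (r n))
      =o[atTop] fun n : ℕ => ((n : ℝ) ^ (-(a/2))) * (Real.log n) ^ ((1+δ)/2)) :
    (fun n : ℕ => opNorm (B n))
      =o[atTop] fun n : ℕ => ((n : ℝ) ^ (-(a/2))) * (Real.log n) ^ ((1+δ)/2) := by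
  have hγ0 : 0 < γ := by linarith
  set g : ℕ → ℝ := fun n => cγ * (n:ℝ)^(-γ) with hgdef
  have hg0 : ∀ n, 0 ≤ g n := fun n =>
    mul_nonneg hcγ.le (Real.rpow_nonneg (Nat.cast_nonneg n) _)
  have hgto0 : Tendsto g atTop (nhds 0) := by
    have h1 : Tendsto (fun x : ℝ => x^(-γ)) atTop (nhds 0) := tendsto_rpow_neg_atTop hγ0
    have h2 : Tendsto (fun n : ℕ => ((n:ℝ))^(-γ)) atTop (nhds 0) :=
      h1.comp tendsto_natCast_atTop_atTop
    simpa using h2.const_mul cγ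
  have hgsum : Tendsto (fun n => ∑ k ∈ Finset.range n, g k) atTop atTop := by
    refine (not_summable_iff_tendsto_nat_atTop_of_nonneg hg0).mp ?_
    rw [hgdef]
    rw [summable_mul_left_iff hcγ.ne']
    rw [Real.summable_nat_rpow]
    linarith
  have hgoal : (fun n : ℕ => ((n:ℝ) ^ (-(a/2))) * (Real.log n) ^ ((1+δ)/2))
      = fun n => wfun a δ n := rfl
  rw [hgoal] at hr ⊢
  have hcond : ∀ᶠ n : ℕ in atTop, (wfun a δ n = 0 → opNorm (r n) = 0) := by
    filter_upwards [eventually_ge_atTop 2] with n hn h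
    exact absurd h (wfun_pos a δ hn).ne'
  have he : Tendsto (fun n => opNorm (r n) / wfun a δ n) atTop (nhds 0) :=
    (Asymptotics.isLittleO_iff_tendsto' hcond).mp hr
  have hu0 : ∀ n, 0 ≤ opNorm (B n) / wfun a δ n :=
    fun n => div_nonneg (opNorm_nonneg _) (wfun_nonneg a δ n)
  obtain ⟨lam, Lam, hlam, hlamLam, hcontr⟩ := opNorm_one_sub_smul H hH
  have hLam : 0 < Lam := lt_of_lt_of_le hlam hlamLam
  -- eventual smallness of g
  have hgLam : ∀ᶠ n : ℕ in atTop, g n * Lam ≤ 1 := by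
    obtain ⟨N, hN⟩ := Metric.tendsto_atTop.mp hgto0 (1/Lam) (by positivity)
    refine eventually_atTop.mpr ⟨N, fun n hn => ?_⟩
    have := hN n hn
    rw [Real.dist_eq, sub_zero] at this
    have h1 : g n < 1/Lam := lt_of_abs_lt this
    calc g n * Lam ≤ (1/Lam) * Lam := mul_le_mul_of_nonneg_right h1.le hLam.le
      _ = 1 := by field_simp
  -- eventual domination a/n ≤ (lam/2) g(n+1)
  have hinfty : Tendsto (fun n : ℕ => (lam/2) * cγ * (1/2) * (((n:ℝ)+1)^(1-γ))) atTop atTop := by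
    have h1 : Tendsto (fun n : ℕ => ((n:ℝ)+1)) atTop atTop :=
      tendsto_atTop_add_const_right _ 1 tendsto_natCast_atTop_atTop
    have h2 : Tendsto (fun n : ℕ => ((n:ℝ)+1)^(1-γ)) atTop atTop :=
      (tendsto_rpow_atTop (by linarith)).comp h1
    exact h2.const_mul_atTop (by positivity)
  have hE4 : ∀ᶠ n : ℕ in atTop, a / (n:ℝ) ≤ (lam/2) * g (n+1) := by
    filter_upwards [hinfty.eventually_ge_atTop a, eventually_ge_atTop 1] with n hn hn1
    have hn1' : (1:ℝ) ≤ (n:ℝ) := by exact_mod_cast hn1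
    have hnpos : (0:ℝ) < (n:ℝ) := by linarith
    have hn1pos : (0:ℝ) < (n:ℝ)+1 := by linarith
    have hcastg : g (n+1) = cγ * ((n:ℝ)+1)^(-γ) := by
      rw [hgdef]; push_cast; ring_nf
    have hrpow : ((n:ℝ)+1)^(1-γ) = ((n:ℝ)+1) * ((n:ℝ)+1)^(-γ) := by
      have : (1:ℝ) - γ = 1 + (-γ) := by ring
      rw [this, Real.rpow_add hn1pos, Real.rpow_one]
    have hrnn : 0 ≤ ((n:ℝ)+1)^(-γ) := Real.rpow_nonneg hn1pos.le _
    have key : a ≤ (lam/2) * g (n+1) * (n:ℝ) := by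
      have h2 : ((n:ℝ)+1)/2 ≤ (n:ℝ) := by linarith
      have h3 : (lam/2) * (cγ * ((n:ℝ)+1)^(-γ)) * (((n:ℝ)+1)/2)
          ≤ (lam/2) * (cγ * ((n:ℝ)+1)^(-γ)) * (n:ℝ) := by
        refine mul_le_mul_of_nonneg_left h2 ?_
        positivity
      have h4 : (lam/2) * cγ * (1/2) * (((n:ℝ)+1)^(1-γ))
          = (lam/2) * (cγ * ((n:ℝ)+1)^(-γ)) * (((n:ℝ)+1)/2) := by
        rw [hrpow]; ring
      rw [hcastg]
      linarith
    rw [div_le_iff₀ hnpos]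
    exact key
  -- matrix norm recursion
  have hbrec : ∀ n : ℕ, opNorm (B (n+1))
      ≤ opNorm (1 - g (n+1) • H) * opNorm (B n) * opNorm (1 - g (n+1) • H)
        + g (n+1) * opNorm (r (n+1)) := by
    intro n
    have hgid : (cγ * ((n+1:ℕ):ℝ)^(-γ)) = g (n+1) := rfl
    rw [hrec n, hgid]
    calc opNorm ((1 - g (n+1) • H) * B n * (1 - g (n+1) • H) + g (n+1) • r (n+1))
        ≤ opNorm ((1 - g (n+1) • H) * B n * (1 - g (n+1) • H))
          + opNorm (g (n+1) • r (n+1)) := opNorm_add_le _ _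
      _ ≤ opNorm (1 - g (n+1) • H) * opNorm (B n) * opNorm (1 - g (n+1) • H)
          + g (n+1) * opNorm (r (n+1)) := by
        refine add_le_add ?_ ?_
        · calc opNorm ((1 - g (n+1) • H) * B n * (1 - g (n+1) • H))
              ≤ opNorm ((1 - g (n+1) • H) * B n) * opNorm (1 - g (n+1) • H) :=
                opNorm_mul_le _ _
            _ ≤ opNorm (1 - g (n+1) • H) * opNorm (B n) * opNorm (1 - g (n+1) • H) :=
                mul_le_mul_of_nonneg_right (opNorm_mul_le _ _) (opNorm_nonneg _)
        · rw [opNorm_smul, abs_of_nonneg (hg0 (n+1))]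
  -- the scalar recursion, eventually
  have hurec : ∀ᶠ n : ℕ in atTop,
      opNorm (B (n+1)) / wfun a δ (n+1)
        ≤ (1 - (lam/2) * g (n+1)) * (opNorm (B n) / wfun a δ n)
          + g (n+1) * (opNorm (r (n+1)) / wfun a δ (n+1)) := by
    filter_upwards [ev_succ hgLam, ratio_bound a δ ha hδ, hE4, eventually_ge_atTop 2]
      with n hgL hrat h4 hn2
    have hw1 : 0 < wfun a δ n := wfun_pos a δ hn2
    have hw2 : 0 < wfun a δ (n+1) := wfun_pos a δ (by omega)
    have hAle : opNorm (1 - g (n+1) • H) ≤ 1 - lam * g (n+1) :=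
      hcontr _ (hg0 _) hgL
    have hA0 : 0 ≤ opNorm (1 - g (n+1) • H) := opNorm_nonneg _
    have hgl1 : lam * g (n+1) ≤ 1 := by
      have h1 : lam * g (n+1) ≤ g (n+1) * Lam := by nlinarith [hg0 (n+1)]
      linarith
    have hb0 : 0 ≤ opNorm (B n) := opNorm_nonneg _
    have hco : 0 ≤ 1 - lam * g (n+1) := by linarith
    have h1a : opNorm (1 - g (n+1) • H) * opNorm (B n) ≤ (1 - lam*g (n+1)) * opNorm (B n) :=
      mul_le_mul_of_nonneg_right hAle hb0
    have h1b : opNorm (1 - g (n+1) • H) * opNorm (B n) * opNorm (1 - g (n+1) • H)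
        ≤ ((1 - lam*g (n+1)) * opNorm (B n)) * (1 - lam*g (n+1)) :=
      mul_le_mul h1a hAle hA0 (mul_nonneg hco hb0)
    have h1 : opNorm (B (n+1)) ≤ (1 - lam * g (n+1))^2 * opNorm (B n)
        + g (n+1) * opNorm (r (n+1)) := by
      have hbr := hbrec n
      nlinarith [h1b]
    have h2 : opNorm (B (n+1)) / wfun a δ (n+1)
        ≤ ((1 - lam*g (n+1))^2 * opNorm (B n) + g (n+1) * opNorm (r (n+1))) / wfun a δ (n+1) :=
      (div_le_div_iff_of_pos_right hw2).mpr h1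
    have h3 : ((1 - lam*g (n+1))^2 * opNorm (B n) + g (n+1) * opNorm (r (n+1))) / wfun a δ (n+1)
        = (1 - lam*g (n+1))^2 * (wfun a δ n / wfun a δ (n+1)) * (opNorm (B n) / wfun a δ n)
          + g (n+1) * (opNorm (r (n+1)) / wfun a δ (n+1)) := by
      field_simp
    have hratnn : 0 ≤ wfun a δ n / wfun a δ (n+1) := by positivity
    have hsq : (1 - lam*g (n+1))^2 ≤ 1 - lam*g (n+1) := by nlinarith [hgl1, mul_nonneg hlam.le (hg0 (n+1))]
    have han : 0 ≤ a/(n:ℝ) := by positivity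
    have h4' : (1 - lam*g (n+1))^2 * (wfun a δ n / wfun a δ (n+1)) ≤ 1 - (lam/2) * g (n+1) := by
      have c1 : (1 - lam*g (n+1))^2 * (wfun a δ n / wfun a δ (n+1))
          ≤ (1 - lam*g (n+1))^2 * (1 + a/n) := mul_le_mul_of_nonneg_left hrat (sq_nonneg _)
      have c2 : (1 - lam*g (n+1))^2 * (1 + a/n) ≤ (1 - lam*g (n+1)) * (1 + a/n) :=
        mul_le_mul_of_nonneg_right hsq (by linarith)
      have c3 : (1 - lam*g (n+1)) * (1 + a/n) ≤ 1 - (lam/2)*g (n+1) := by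
        nlinarith [hg0 (n+1), mul_nonneg (mul_nonneg hlam.le (hg0 (n+1))) han]
      linarith
    have h5 : (1 - lam*g (n+1))^2 * (wfun a δ n / wfun a δ (n+1)) * (opNorm (B n) / wfun a δ n)
        ≤ (1 - (lam/2) * g (n+1)) * (opNorm (B n) / wfun a δ n) :=
      mul_le_mul_of_nonneg_right h4' (hu0 n)
    calc opNorm (B (n+1)) / wfun a δ (n+1)
        ≤ _ := h2
      _ = _ := h3
      _ ≤ _ := add_le_add h5 (le_refl _)
  have hgsmall : ∀ᶠ n : ℕ in atTop, (lam/2) * g n ≤ 1 := by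
    filter_upwards [hgLam] with n hn
    nlinarith [hg0 n]
  have hu : Tendsto (fun n => opNorm (B n) / wfun a δ n) atTop (nhds 0) :=
    scalar_rec_tendsto_zero _ g _ (lam/2) (by linarith) hg0 hgsum hgsmall hu0 he hurec
  have hcond' : ∀ᶠ n : ℕ in atTop, (wfun a δ n = 0 → opNorm (B n) = 0) := by
    filter_upwards [eventually_ge_atTop 2] with n hn h
    exact absurd h (wfun_pos a δ hn).ne'
  exact (Asymptotics.isLittleO_iff_tendsto' hcond').mpr hu


/-- If `B_{n+1} = (I − γ_{n+1}H) B_n (I − γ_{n+1}H) + γ_{n+1} r_{n+1}` with `H` symmetric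
positive definite, `γ_n = c_γ n^{−γ}` with `γ ∈ (1/2,1)`, and
`‖r_n‖_op = o(n^{−a/2} (ln n)^{(1+δ)/2})` a.s. for some `a, δ > 0`, then
`‖B_n‖_op = o(n^{−a/2} (ln n)^{(1+δ)/2})` almost surely. -/
theorem stmt10 {Ω : Type*} [MeasurableSpace Ω] (μ : Measure Ω) [IsProbabilityMeasure μ]
    {d : ℕ} (H : Matrix (Fin d) (Fin d) ℝ) (hH : H.PosDef)
    (B r : ℕ → Ω → Matrix (Fin d) (Fin d) ℝ)
    (cγ γ a δ : ℝ) (hcγ : 0 < cγ) (hγlow : 1/2 < γ) (hγhigh : γ < 1)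
    (ha : 0 < a) (hδ : 0 < δ)
    (hrec : ∀ n ω, B (n+1) ω
      = (1 - (cγ * ((n+1 : ℕ) : ℝ) ^ (-γ)) • H) * B n ω
          * (1 - (cγ * ((n+1 : ℕ) : ℝ) ^ (-γ)) • H)
        + (cγ * ((n+1 : ℕ) : ℝ) ^ (-γ)) • r (n+1) ω)
    (hrlittle : ∀ᵐ ω ∂μ, (fun n : ℕ => opNorm (r n ω))
      =o[atTop] fun n : ℕ => ((n : ℝ) ^ (-(a/2))) * (Real.log n) ^ ((1+δ)/2)) :
    ∀ᵐ ω ∂μ, (fun n : ℕ => opNorm (B n ω))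
      =o[atTop] fun n : ℕ => ((n : ℝ) ^ (-(a/2))) * (Real.log n) ^ ((1+δ)/2) := by
  filter_upwards [hrlittle] with ω hω
  exact main_det H hH (fun n => B n ω) (fun n => r n ω) cγ γ a δ hcγ hγlow hγhigh ha hδ
    (fun n => hrec n ω) hω
end

section
/- Abel summation control: Let (u_k) be a positive sequence with |u_{k+1} − u_k| ≤ 2k^{γ−1} max{1,τ} (ln(k+1))^τ where u_k = (ln(k+1))^τ k^γ/c for constants c > 0, γ ∈ (1/2,1), τ ≥ 0. Then for any sequence of matrices (A_k) with ‖A_k − H^{-1}‖ = o(k^{−ρ}(ln k)^{(1+δ)/2}) a.s. (0 < ρ < γ), the Abel-transformed average t_n Σ_{k=0}^n u_{k+1}((A_k − H^{-1}) − (A_{k+1} − H^{-1})), with t_n = 1/Σ_{k=0}^n (ln(k+1))^τ, has Frobenius norm o(n^{γ−1−ρ}(ln n)^{1+δ}) almost surely. -/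
open Matrix MeasureTheory Filter Asymptotics

noncomputable def embL (d : ℕ) : Matrix (Fin d) (Fin d) ℝ →ₗ[ℝ] EuclideanSpace ℝ (Fin d × Fin d) where
  toFun M := WithLp.toLp 2 (fun p => M p.1 p.2)
  map_add' M N := by ext p; simp [Matrix.add_apply]
  map_smul' r M := by ext p; simp [Matrix.smul_apply]

lemma frob_eq {d : ℕ} (M : Matrix (Fin d) (Fin d) ℝ) : frobNorm M = ‖embL d M‖ := by
  rw [EuclideanSpace.norm_eq, frobNorm, Fintype.sum_prod_type]
  simp [embL, Real.norm_eq_abs, sq_abs]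

lemma frob_nonneg {d : ℕ} (M : Matrix (Fin d) (Fin d) ℝ) : 0 ≤ frobNorm M := Real.sqrt_nonneg _

lemma abel_id {V : Type*} [AddCommGroup V] [Module ℝ V] (u : ℕ → ℝ) (B : ℕ → V) (n : ℕ) :
    ∑ k ∈ Finset.range (n+1), u (k+1) • (B k - B (k+1)) =
      u 1 • B 0 - u (n+1) • B (n+1) + ∑ k ∈ Finset.range n, (u (k+2) - u (k+1)) • B (k+1) := by
  induction n with
  | zero => simp [smul_sub]
  | succ n ih =>
    rw [Finset.sum_range_succ, ih, Finset.sum_range_succ]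
    module

lemma sum_pow_le {a : ℝ} (ha : -1 < a) (ha' : a < 0) (n : ℕ) :
    ∑ k ∈ Finset.range n, ((k:ℝ)+1)^a ≤ 1 + (n:ℝ)^(a+1)/(a+1) := by
  have h1 : (0:ℝ) < a + 1 := by linarith
  obtain rfl | ⟨m, rfl⟩ : n = 0 ∨ ∃ m, n = m + 1 := by cases n <;> simp
  · simp [Real.zero_rpow (show a+1 ≠ 0 by linarith)]
  rw [Finset.sum_range_succ']
  have hanti : AntitoneOn (fun x : ℝ => x ^ a) (Set.Icc (1:ℝ) (1 + (m:ℕ))) := by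
    apply (Real.antitoneOn_rpow_Ioi_of_exponent_nonpos ha'.le).mono
    intro x hx
    have := hx.1
    exact Set.mem_Ioi.2 (by linarith)
  have hsum := hanti.sum_le_integral
  have hint : ∫ x in (1:ℝ)..(1 + (m:ℕ)), x ^ a = ((1+(m:ℝ))^(a+1) - 1^(a+1))/(a+1) := by
    rw [integral_rpow (Or.inl ha)]
  rw [hint] at hsum
  have key : ∑ i ∈ Finset.range m, ((1:ℝ) + ((i+1:ℕ):ℝ)) ^ a ≤ ((1+(m:ℝ))^(a+1) - 1)/(a+1) := by
    rw [Real.one_rpow] at hsum; exact hsum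
  have hX : ((1+(m:ℝ))^(a+1) - 1)/(a+1) ≤ (1+(m:ℝ))^(a+1)/(a+1) := by
    gcongr; linarith
  calc (∑ i ∈ Finset.range m, (((i+1:ℕ):ℝ)+1)^a) + (((0:ℕ):ℝ)+1)^a
      = (∑ i ∈ Finset.range m, ((1:ℝ) + ((i+1:ℕ):ℝ))^a) + 1 := by
        congr 1
        · refine Finset.sum_congr rfl fun i _ => ?_; ring_nf
        · norm_num
    _ ≤ ((1+(m:ℝ))^(a+1) - 1)/(a+1) + 1 := by exact add_le_add_left key 1
    _ ≤ (1+(m:ℝ))^(a+1)/(a+1) + 1 := add_le_add_left hX 1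
    _ = 1 + ((m+1:ℕ):ℝ)^(a+1)/(a+1) := by push_cast; ring_nf

lemma denom_lb (τ : ℝ) (hτ : 0 ≤ τ) (n : ℕ) (hn : 8 ≤ n) :
    (n:ℝ)/4 * ((Real.log n)/2)^τ ≤ ∑ k ∈ Finset.range (n+1), (Real.log (k+1))^τ := by
  have hterm : ∀ k ∈ Finset.Ico (n/2) (n+1), ((Real.log n)/2)^τ ≤ (Real.log ((k:ℝ)+1))^τ := by
    intro k hk
    obtain ⟨hk1, hk2⟩ := Finset.mem_Ico.mp hk
    have hnk : n ≤ 2*k+1 := by omega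
    have hnkr : (n:ℝ) ≤ 2*(k:ℝ)+1 := by exact_mod_cast hnk
    have hkr : Real.sqrt n ≤ (k:ℝ)+1 := by
      have hsq : Real.sqrt n ≤ ((n:ℝ)+1)/2 := by
        rw [show ((n:ℝ)+1)/2 = Real.sqrt ((((n:ℝ)+1)/2)^2) by rw [Real.sqrt_sq (by positivity)]]
        apply Real.sqrt_le_sqrt
        nlinarith [sq_nonneg ((n:ℝ)-1)]
      linarith
    have hlog : (Real.log n)/2 ≤ Real.log ((k:ℝ)+1) := by
      rw [← Real.log_sqrt (by positivity)]
      exact Real.log_le_log (Real.sqrt_pos.mpr (by positivity)) hkr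
    exact Real.rpow_le_rpow (by positivity) hlog hτ
  have hsub : Finset.Ico (n/2) (n+1) ⊆ Finset.range (n+1) := by
    rw [Finset.range_eq_Ico]; exact Finset.Ico_subset_Ico (Nat.zero_le _) le_rfl
  have hcard : ((n:ℝ)/4) ≤ ((Finset.Ico (n/2) (n+1)).card : ℝ) := by
    rw [Nat.card_Ico]
    have : n/4 + 1 ≤ n + 1 - n/2 := by omega
    have h2 : (n:ℝ)/4 ≤ ((n/4 : ℕ):ℝ) + 1 := by
      have h4 : n < 4*(n/4) + 4 := by omega
      have h4r : (n:ℝ) < 4*((n/4:ℕ):ℝ) + 4 := by exact_mod_cast h4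
      linarith
    calc (n:ℝ)/4 ≤ ((n/4 : ℕ):ℝ) + 1 := h2
      _ ≤ ((n + 1 - n/2 : ℕ):ℝ) := by exact_mod_cast this
  calc (n:ℝ)/4 * ((Real.log n)/2)^τ
      ≤ ((Finset.Ico (n/2) (n+1)).card : ℝ) * ((Real.log n)/2)^τ := by
        gcongr
    _ ≤ ∑ k ∈ Finset.Ico (n/2) (n+1), (Real.log ((k:ℝ)+1))^τ := by
        have := Finset.card_nsmul_le_sum (Finset.Ico (n/2) (n+1)) _ _ hterm
        simpa [nsmul_eq_mul] using this
    _ ≤ ∑ k ∈ Finset.range (n+1), (Real.log ((k:ℝ)+1))^τ := by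
        apply Finset.sum_le_sum_of_subset_of_nonneg hsub
        intro k _ _
        exact Real.rpow_nonneg (Real.log_nonneg (by linarith [Nat.cast_nonneg (α := ℝ) k])) τ
    _ = ∑ k ∈ Finset.range (n+1), (Real.log (k+1))^τ := by
        refine Finset.sum_congr rfl fun k _ => ?_; norm_num

lemma mul_log_pow_le {τ q L y z : ℝ} (hτ : 0 ≤ τ) (hq : 0 ≤ q) (hL : 1 ≤ L)
    (hy : 0 ≤ y) (hz : 0 ≤ z) (hy2 : y ≤ 2*L) (hz2 : z ≤ 2*L) :
    y ^ τ * z ^ q ≤ 2 ^ (τ+q) * L ^ (τ+q) := by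
  have h2L : (0:ℝ) ≤ 2*L := by linarith
  calc y^τ * z^q ≤ (2*L)^τ * (2*L)^q :=
        mul_le_mul (Real.rpow_le_rpow hy hy2 hτ) (Real.rpow_le_rpow hz hz2 hq)
          (Real.rpow_nonneg hz q) (Real.rpow_nonneg h2L τ)
    _ = (2*L)^(τ+q) := (Real.rpow_add (by linarith) _ _).symm
    _ = 2^(τ+q) * L^(τ+q) := Real.mul_rpow (by norm_num) (by linarith)

lemma succ_rpow_le {p x : ℝ} (hp0 : 0 ≤ p) (hp1 : p ≤ 1) (hx : 1 ≤ x) :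
    (x+1)^p ≤ 2*x^p := by
  calc (x+1)^p ≤ (2*x)^p := Real.rpow_le_rpow (by linarith) (by linarith) hp0
    _ = 2^p * x^p := Real.mul_rpow (by norm_num) (by linarith)
    _ ≤ 2^(1:ℝ) * x^p :=
        mul_le_mul_of_nonneg_right (Real.rpow_le_rpow_of_exponent_le (by norm_num) hp1)
          (Real.rpow_nonneg (by linarith) p)
    _ = 2*x^p := by rw [Real.rpow_one]

set_option maxHeartbeats 1000000 in
/-- Abel summation control. -/
theorem stmt17 {Ω : Type*} [MeasurableSpace Ω] (μ : Measure Ω) [IsProbabilityMeasure μ]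
    {d : ℕ} (A : ℕ → Ω → Matrix (Fin d) (Fin d) ℝ) (Hinv : Matrix (Fin d) (Fin d) ℝ)
    (c γ τ ρ δ : ℝ) (hc : 0 < c) (hγlow : 1/2 < γ) (hγhigh : γ < 1)
    (hτ : 0 ≤ τ) (hρ0 : 0 < ρ) (hργ : ρ < γ) (hδ : 0 < δ)
    (u : ℕ → ℝ) (hu : ∀ k : ℕ, u k = (Real.log (k+1)) ^ τ * (k : ℝ) ^ γ / c)
    (hudiff : ∀ k : ℕ, 1 ≤ k →
      |u (k+1) - u k| ≤ 2 * (k : ℝ) ^ (γ - 1) * max 1 τ * (Real.log (k+1)) ^ τ)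
    (t : ℕ → ℝ) (ht : ∀ n : ℕ, t n = 1 / ∑ k ∈ Finset.range (n+1), (Real.log (k+1)) ^ τ)
    (hA : ∀ᵐ ω ∂μ, (fun k : ℕ => frobNorm (A k ω - Hinv))
      =o[atTop] fun k : ℕ => ((k : ℝ) ^ (-ρ)) * (Real.log k) ^ ((1+δ)/2)) :
    ∀ᵐ ω ∂μ,
      (fun n : ℕ => frobNorm (t n • ∑ k ∈ Finset.range (n+1),
          u (k+1) • ((A k ω - Hinv) - (A (k+1) ω - Hinv))))
        =o[atTop] fun n : ℕ => ((n : ℝ) ^ (γ - 1 - ρ)) * (Real.log n) ^ (1 + δ) := by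
  have hlo : (fun n : ℕ => ((n : ℝ) ^ (γ - 1 - ρ)) * (Real.log n) ^ ((1+δ)/2))
      =o[atTop] fun n : ℕ => ((n : ℝ) ^ (γ - 1 - ρ)) * (Real.log n) ^ (1 + δ) := by
    refine (isBigO_refl (fun n : ℕ => ((n:ℝ) ^ (γ - 1 - ρ))) atTop).mul_isLittleO ?_
    have hne : ∀ᶠ n : ℕ in atTop, (Real.log (n:ℝ)) ^ (1+δ) = 0 → (Real.log (n:ℝ)) ^ ((1+δ)/2) = 0 := by
      filter_upwards [eventually_ge_atTop 3] with n hn h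
      have h1 : (1:ℝ) < (n:ℝ) := by exact_mod_cast lt_of_lt_of_le (by norm_num) hn
      have : (0:ℝ) < Real.log n := Real.log_pos h1
      exact absurd h (by positivity)
    rw [isLittleO_iff_tendsto' hne]
    have key : Tendsto (fun n : ℕ => (Real.log (n:ℝ)) ^ (-((1+δ)/2))) atTop (nhds 0) :=
      (tendsto_rpow_neg_atTop (by positivity)).comp
        (Real.tendsto_log_atTop.comp tendsto_natCast_atTop_atTop)
    refine key.congr' ?_
    filter_upwards [eventually_ge_atTop 3] with n hn
    have h1 : (1:ℝ) < (n:ℝ) := by exact_mod_cast lt_of_lt_of_le (by norm_num) hn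
    have hL : (0:ℝ) < Real.log n := Real.log_pos h1
    have : (Real.log (n:ℝ)) ^ (-((1+δ)/2)) = (Real.log (n:ℝ)) ^ ((1+δ)/2 - (1+δ)) := by
      ring_nf
    rw [this, Real.rpow_sub hL]
  filter_upwards [hA] with ω hω
  refine IsBigO.trans_isLittleO ?_ hlo
  set B : ℕ → Matrix (Fin d) (Fin d) ℝ := fun k => A k ω - Hinv with hB
  set b : ℕ → ℝ := fun k => frobNorm (B k) with hbdef
  obtain ⟨N₀, hN₀⟩ := (eventually_atTop.mp (isLittleO_iff.mp hω one_pos))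
  have hb_nonneg : ∀ k, 0 ≤ b k := fun k => frob_nonneg _
  have hu_nonneg : ∀ k, 0 ≤ u k := by
    intro k
    rw [hu k]
    have h1 : (0:ℝ) ≤ Real.log (k+1) := Real.log_nonneg (by linarith [Nat.cast_nonneg (α := ℝ) k])
    positivity
  have hSnorm : ∀ n : ℕ, frobNorm (∑ k ∈ Finset.range (n+1), u (k+1) • (B k - B (k+1)))
      ≤ u 1 * b 0 + u (n+1) * b (n+1)
        + ∑ k ∈ Finset.range n, |u (k+2) - u (k+1)| * b (k+1) := by
    intro n
    rw [abel_id, frob_eq, map_add, map_sub, _root_.map_smul, _root_.map_smul, map_sum]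
    refine le_trans (norm_add_le _ _) ?_
    gcongr
    · refine le_trans (norm_sub_le _ _) ?_
      rw [norm_smul, norm_smul, Real.norm_eq_abs, Real.norm_eq_abs,
        abs_of_nonneg (hu_nonneg 1), abs_of_nonneg (hu_nonneg (n+1))]
      rw [hbdef]
      simp only [frob_eq]
      exact le_rfl
    · refine le_trans (norm_sum_le _ _) ?_
      refine Finset.sum_le_sum fun k _ => ?_
      rw [_root_.map_smul, norm_smul, Real.norm_eq_abs, hbdef]
      simp only [frob_eq]
      exact le_rfl
  -- b bound in convenient real form
  have hbbound : ∀ k : ℕ, N₀ ≤ k + 1 →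
      b (k+1) ≤ ((k:ℝ)+1)^(-ρ) * (Real.log ((k:ℝ)+1))^((1+δ)/2) := by
    intro k hk
    have h := hN₀ (k+1) hk
    have hg0 : 0 ≤ (((k+1:ℕ)):ℝ)^(-ρ) * (Real.log (((k+1:ℕ)):ℝ))^((1+δ)/2) :=
      mul_nonneg (Real.rpow_nonneg (by positivity) _)
        (Real.rpow_nonneg (Real.log_nonneg (by exact_mod_cast Nat.one_le_iff_ne_zero.2 (Nat.succ_ne_zero k))) _)
    rw [Real.norm_eq_abs, Real.norm_eq_abs, abs_of_nonneg (hb_nonneg _), one_mul,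
      abs_of_nonneg hg0] at h
    have hc1 : (((k+1:ℕ)):ℝ) = (k:ℝ)+1 := by push_cast; ring
    rw [hc1] at h
    exact h
  -- constants
  have hp0 : (0:ℝ) < γ - ρ := by linarith
  have hp1 : γ - ρ ≤ 1 := by linarith
  have hs0 : (0:ℝ) ≤ τ + (1+δ)/2 := by linarith
  have hM1 : (1:ℝ) ≤ max 1 τ := le_max_left _ _
  set C₁ := ∑ k ∈ Finset.range N₀, |u (k+2) - u (k+1)| * b (k+1) with hC₁def
  have hC₁0 : 0 ≤ C₁ := Finset.sum_nonneg fun k _ => mul_nonneg (abs_nonneg _) (hb_nonneg _)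
  set T1 := u 1 * b 0 with hT1def
  have hT10 : 0 ≤ T1 := mul_nonneg (hu_nonneg 1) (hb_nonneg 0)
  set K₁ := (2:ℝ)^(1+(τ + (1+δ)/2))/c with hK₁def
  have hK₁0 : 0 ≤ K₁ := by
    have : (0:ℝ) < (2:ℝ)^(1+(τ + (1+δ)/2)) := Real.rpow_pos_of_pos (by norm_num) _
    positivity
  set K₂ := 2*(max 1 τ)*(2:ℝ)^(τ + (1+δ)/2)*(1+1/(γ-ρ)) with hK₂def
  have hK₂0 : 0 ≤ K₂ := by
    have h2s : (0:ℝ) < (2:ℝ)^(τ + (1+δ)/2) := Real.rpow_pos_of_pos (by norm_num) _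
    have h3 : (0:ℝ) < 1 + 1/(γ-ρ) := by positivity
    have h4 : (0:ℝ) < max 1 τ := by linarith
    positivity
  clear_value B b C₁ T1 K₁ K₂
  rw [isBigO_iff]
  refine ⟨4*(2:ℝ)^τ*(T1 + C₁ + K₁ + K₂), ?_⟩
  filter_upwards [eventually_ge_atTop (max (N₀+8) 8)] with n hn
  have hn8 : 8 ≤ n := le_trans (le_max_right _ _) hn
  have hnN₀ : N₀ ≤ n := by
    have := le_trans (le_max_left (N₀+8) 8) hn; omega
  have hnr8 : (8:ℝ) ≤ (n:ℝ) := by exact_mod_cast hn8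
  have hn1 : (1:ℝ) ≤ (n:ℝ) := by linarith
  have hn0 : (0:ℝ) < (n:ℝ) := by linarith
  set L := Real.log n with hLdef
  have hL1 : 1 ≤ L := by
    rw [hLdef, Real.le_log_iff_exp_le (by linarith)]
    calc Real.exp 1 ≤ 2.7182818286 := Real.exp_one_lt_d9.le
      _ ≤ (n:ℝ) := le_trans (by norm_num) hnr8
  have hL0 : (0:ℝ) < L := by linarith
  have hLτ0 : (0:ℝ) < L^τ := Real.rpow_pos_of_pos hL0 τ
  -- log comparison helper
  have hlog2 : ∀ x : ℝ, 1 ≤ x → x ≤ (n:ℝ)^2 → Real.log x ≤ 2*L := by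
    intro x hx1 hx2
    calc Real.log x ≤ Real.log ((n:ℝ)^2) := Real.log_le_log (by linarith) hx2
      _ = 2*L := by rw [hLdef, Real.log_pow]; norm_num
  clear_value L
  -- t bound
  have hD := denom_lb τ hτ n hn8
  rw [← hLdef] at hD
  have hLB : (0:ℝ) < (n:ℝ)/4 * (L/2)^τ := by positivity
  have hDpos : (0:ℝ) < ∑ k ∈ Finset.range (n+1), (Real.log (k+1))^τ := lt_of_lt_of_le hLB hD
  have htpos : 0 < t n := by rw [ht]; positivity
  have htb : t n ≤ 4*2^τ/((n:ℝ) * L^τ) := by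
    rw [ht]
    have heq : (n:ℝ)/4 * (L/2)^τ = (n:ℝ) * L^τ / (4*2^τ) := by
      rw [Real.div_rpow hL0.le (by norm_num)]
      have h2 : (0:ℝ) < (2:ℝ)^τ := Real.rpow_pos_of_pos (by norm_num) τ
      field_simp
    calc 1 / ∑ k ∈ Finset.range (n+1), (Real.log (k+1))^τ
        ≤ 1 / ((n:ℝ)/4 * (L/2)^τ) := one_div_le_one_div_of_le hLB hD
      _ = 4*2^τ/((n:ℝ) * L^τ) := by rw [heq, one_div_div]
  -- term (i)
  have hterm1 : u (n+1) * b (n+1) ≤ K₁ * ((n:ℝ)^(γ-ρ) * L^(τ + (1+δ)/2)) := by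
    have hub : u (n+1) = (Real.log ((n:ℝ)+2))^τ * ((n:ℝ)+1)^γ / c := by
      rw [hu]; push_cast; ring_nf
    have hlogA : Real.log ((n:ℝ)+2) ≤ 2*L := hlog2 _ (by linarith) (by nlinarith)
    have hlogB : Real.log ((n:ℝ)+1) ≤ 2*L := hlog2 _ (by linarith) (by nlinarith)
    have hbb := hbbound n (by omega)
    have hlA0 : 0 ≤ Real.log ((n:ℝ)+2) := Real.log_nonneg (by linarith)
    have hlB0 : 0 ≤ Real.log ((n:ℝ)+1) := Real.log_nonneg (by linarith)
    have hu0 : 0 ≤ (Real.log ((n:ℝ)+2))^τ * ((n:ℝ)+1)^γ / c := by positivity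
    calc u (n+1) * b (n+1)
        ≤ ((Real.log ((n:ℝ)+2))^τ * ((n:ℝ)+1)^γ / c)
            * (((n:ℝ)+1)^(-ρ) * (Real.log ((n:ℝ)+1))^((1+δ)/2)) := by
          rw [hub]; exact mul_le_mul_of_nonneg_left hbb hu0
      _ = (1/c) * ((((n:ℝ)+1)^γ * ((n:ℝ)+1)^(-ρ))
            * ((Real.log ((n:ℝ)+2))^τ * (Real.log ((n:ℝ)+1))^((1+δ)/2))) := by ring
      _ ≤ (1/c) * ((2*(n:ℝ)^(γ-ρ)) * (2^(τ + (1+δ)/2) * L^(τ + (1+δ)/2))) := by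
          apply mul_le_mul_of_nonneg_left _ (by positivity)
          apply mul_le_mul _ (mul_log_pow_le hτ (by linarith) hL1 hlA0 hlB0 hlogA hlogB)
            (mul_nonneg (Real.rpow_nonneg hlA0 _) (Real.rpow_nonneg hlB0 _))
            (by positivity)
          rw [← Real.rpow_add (by linarith : (0:ℝ) < (n:ℝ)+1)]
          rw [show γ + -ρ = γ - ρ by ring]
          exact succ_rpow_le hp0.le hp1 hn1
      _ = K₁ * ((n:ℝ)^(γ-ρ) * L^(τ + (1+δ)/2)) := by
          rw [hK₁def, show (2:ℝ)^(1+(τ + (1+δ)/2)) = 2*2^(τ + (1+δ)/2) by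
            rw [Real.rpow_add (by norm_num : (0:ℝ)<2) 1 (τ + (1+δ)/2), Real.rpow_one]]
          ring
  -- term (ii)
  have hterm2 : ∑ k ∈ Finset.range n, |u (k+2) - u (k+1)| * b (k+1)
      ≤ C₁ + K₂ * ((n:ℝ)^(γ-ρ) * L^(τ + (1+δ)/2)) := by
    have hsplit : ∑ k ∈ Finset.range n, |u (k+2) - u (k+1)| * b (k+1)
        = C₁ + ∑ k ∈ Finset.Ico N₀ n, |u (k+2) - u (k+1)| * b (k+1) := by
      rw [hC₁def, Finset.range_eq_Ico,
        ← Finset.sum_Ico_consecutive _ (Nat.zero_le N₀) hnN₀, Finset.range_eq_Ico]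
    rw [hsplit]
    refine add_le_add_right ?_ C₁
    have hterm : ∀ k ∈ Finset.Ico N₀ n, |u (k+2) - u (k+1)| * b (k+1)
        ≤ (2*(max 1 τ)*(2^(τ + (1+δ)/2) * L^(τ + (1+δ)/2))) * ((k:ℝ)+1)^(γ-ρ-1) := by
      intro k hk
      obtain ⟨hk1, hk2⟩ := Finset.mem_Ico.mp hk
      have hkn : (k:ℝ) < n := by exact_mod_cast hk2
      have hdu := hudiff (k+1) (by omega)
      have hdu' : |u (k+2) - u (k+1)|
          ≤ 2 * ((k:ℝ)+1)^(γ-1) * (max 1 τ) * (Real.log ((k:ℝ)+2))^τ := by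
        push_cast at hdu
        rw [show (k:ℝ)+1+1 = (k:ℝ)+2 by ring] at hdu
        exact hdu
      have hbb := hbbound k (by omega)
      have hlA0 : 0 ≤ Real.log ((k:ℝ)+2) := Real.log_nonneg (by linarith [Nat.cast_nonneg (α := ℝ) k])
      have hlB0 : 0 ≤ Real.log ((k:ℝ)+1) := Real.log_nonneg (by linarith [Nat.cast_nonneg (α := ℝ) k])
      have hlogA : Real.log ((k:ℝ)+2) ≤ 2*L := hlog2 _ (by linarith [Nat.cast_nonneg (α := ℝ) k]) (by nlinarith [Nat.cast_nonneg (α := ℝ) k])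
      have hlogB : Real.log ((k:ℝ)+1) ≤ 2*L := hlog2 _ (by linarith [Nat.cast_nonneg (α := ℝ) k]) (by nlinarith [Nat.cast_nonneg (α := ℝ) k])
      have h1 : 0 ≤ 2 * ((k:ℝ)+1)^(γ-1) * (max 1 τ) * (Real.log ((k:ℝ)+2))^τ := by
        have := Real.rpow_nonneg (show (0:ℝ) ≤ (k:ℝ)+1 by positivity) (γ-1)
        have := Real.rpow_nonneg hlA0 τ
        positivity
      calc |u (k+2) - u (k+1)| * b (k+1)
          ≤ (2 * ((k:ℝ)+1)^(γ-1) * (max 1 τ) * (Real.log ((k:ℝ)+2))^τ)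
              * (((k:ℝ)+1)^(-ρ) * (Real.log ((k:ℝ)+1))^((1+δ)/2)) :=
            mul_le_mul hdu' hbb (hb_nonneg _) h1
        _ = (2*(max 1 τ)) * ((((k:ℝ)+1)^(γ-1) * ((k:ℝ)+1)^(-ρ))
              * ((Real.log ((k:ℝ)+2))^τ * (Real.log ((k:ℝ)+1))^((1+δ)/2))) := by ring
        _ ≤ (2*(max 1 τ)) * ((((k:ℝ)+1)^(γ-ρ-1)) * (2^(τ + (1+δ)/2) * L^(τ + (1+δ)/2))) := by
            apply mul_le_mul_of_nonneg_left _ (by linarith)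
            rw [← Real.rpow_add (by positivity : (0:ℝ) < (k:ℝ)+1),
              show γ - 1 + -ρ = γ - ρ - 1 by ring]
            exact mul_le_mul_of_nonneg_left
              (mul_log_pow_le hτ (by linarith) hL1 hlA0 hlB0 hlogA hlogB)
              (Real.rpow_nonneg (by positivity) _)
        _ = (2*(max 1 τ)*(2^(τ + (1+δ)/2) * L^(τ + (1+δ)/2))) * ((k:ℝ)+1)^(γ-ρ-1) := by ring
    calc ∑ k ∈ Finset.Ico N₀ n, |u (k+2) - u (k+1)| * b (k+1)
        ≤ ∑ k ∈ Finset.Ico N₀ n,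
            (2*(max 1 τ)*(2^(τ + (1+δ)/2) * L^(τ + (1+δ)/2))) * ((k:ℝ)+1)^(γ-ρ-1) :=
          Finset.sum_le_sum hterm
      _ = (2*(max 1 τ)*(2^(τ + (1+δ)/2) * L^(τ + (1+δ)/2)))
            * ∑ k ∈ Finset.Ico N₀ n, ((k:ℝ)+1)^(γ-ρ-1) := by rw [Finset.mul_sum]
      _ ≤ (2*(max 1 τ)*(2^(τ + (1+δ)/2) * L^(τ + (1+δ)/2)))
            * ((1+1/(γ-ρ)) * (n:ℝ)^(γ-ρ)) := by
          apply mul_le_mul_of_nonneg_left _ ?_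
          · calc ∑ k ∈ Finset.Ico N₀ n, ((k:ℝ)+1)^(γ-ρ-1)
                ≤ ∑ k ∈ Finset.range n, ((k:ℝ)+1)^(γ-ρ-1) := by
                  apply Finset.sum_le_sum_of_subset_of_nonneg
                  · rw [Finset.range_eq_Ico]
                    exact Finset.Ico_subset_Ico (Nat.zero_le _) le_rfl
                  · intro k _ _; exact Real.rpow_nonneg (by positivity) _
              _ ≤ 1 + (n:ℝ)^(γ-ρ-1+1)/(γ-ρ-1+1) := sum_pow_le (by linarith) (by linarith) n
              _ = 1 + (n:ℝ)^(γ-ρ)/(γ-ρ) := by rw [show γ-ρ-1+1 = γ-ρ by ring]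
              _ ≤ (1+1/(γ-ρ)) * (n:ℝ)^(γ-ρ) := by
                  have hnp1 : 1 ≤ (n:ℝ)^(γ-ρ) := Real.one_le_rpow hn1 hp0.le
                  rw [add_mul, one_mul, div_eq_mul_inv, mul_comm ((n:ℝ)^(γ-ρ)), one_div]
                  gcongr
          · have h2s : (0:ℝ) < (2:ℝ)^(τ + (1+δ)/2) := Real.rpow_pos_of_pos (by norm_num) _
            have h4 : (0:ℝ) < max 1 τ := by linarith
            positivity
      _ = K₂ * ((n:ℝ)^(γ-ρ) * L^(τ + (1+δ)/2)) := by rw [hK₂def]; ring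
  -- key rpow ratio identities
  have hE2 : (n:ℝ)^(γ-ρ) * L^(τ + (1+δ)/2) / ((n:ℝ)*L^τ)
      = (n:ℝ)^(γ-1-ρ) * L^((1+δ)/2) := by
    rw [show γ-1-ρ = (γ-ρ) - 1 by ring, Real.rpow_sub hn0 (γ-ρ) 1, Real.rpow_one,
      show (1+δ)/2 = (τ + (1+δ)/2) - τ by ring, Real.rpow_sub hL0 (τ + (1+δ)/2) τ,
      div_mul_div_comm]
    ring_nf
  have hE1 : 1/((n:ℝ)*L^τ) ≤ (n:ℝ)^(γ-1-ρ) * L^((1+δ)/2) := by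
    have h1 : 1/((n:ℝ)*L^τ) = (n:ℝ)^(-(1:ℝ)) * L^(-τ) := by
      rw [Real.rpow_neg hn0.le, Real.rpow_neg hL0.le, Real.rpow_one]
      field_simp
    rw [h1]
    have h2 : (n:ℝ)^(-(1:ℝ)) ≤ (n:ℝ)^(γ-1-ρ) :=
      Real.rpow_le_rpow_of_exponent_le hn1 (by linarith)
    have h3 : L^(-τ) ≤ 1 := Real.rpow_le_one_of_one_le_of_nonpos hL1 (by linarith)
    have h4 : (1:ℝ) ≤ L^((1+δ)/2) := Real.one_le_rpow hL1 (by linarith)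
    calc (n:ℝ)^(-(1:ℝ)) * L^(-τ) ≤ (n:ℝ)^(γ-1-ρ) * 1 :=
          mul_le_mul h2 h3 (Real.rpow_nonneg hL0.le _) (Real.rpow_nonneg hn0.le _)
      _ ≤ (n:ℝ)^(γ-1-ρ) * L^((1+δ)/2) := by
          rw [mul_one]
          exact le_mul_of_one_le_right (Real.rpow_nonneg hn0.le _) h4
  -- final assembly
  have hwnn : (0:ℝ) ≤ (n:ℝ)^(γ-1-ρ) * L^((1+δ)/2) :=
    mul_nonneg (Real.rpow_nonneg hn0.le _) (Real.rpow_nonneg hL0.le _)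
  have hfn : frobNorm (t n • ∑ k ∈ Finset.range (n+1), u (k+1) • (B k - B (k+1)))
      = t n * frobNorm (∑ k ∈ Finset.range (n+1), u (k+1) • (B k - B (k+1))) := by
    rw [frob_eq, _root_.map_smul, norm_smul, Real.norm_eq_abs, abs_of_pos htpos, frob_eq]
  have hXnn : (0:ℝ) ≤ (n:ℝ)^(γ-ρ) * L^(τ + (1+δ)/2) :=
    mul_nonneg (Real.rpow_nonneg hn0.le _) (Real.rpow_nonneg hL0.le _)
  have hmain : frobNorm (t n • ∑ k ∈ Finset.range (n+1), u (k+1) • (B k - B (k+1)))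
      ≤ 4*(2:ℝ)^τ*(T1 + C₁ + K₁ + K₂) * ((n:ℝ)^(γ-1-ρ) * L^((1+δ)/2)) := by
    rw [hfn]
    have h2τ0 : (0:ℝ) < (2:ℝ)^τ := Real.rpow_pos_of_pos (by norm_num) τ
    calc t n * frobNorm (∑ k ∈ Finset.range (n+1), u (k+1) • (B k - B (k+1)))
        ≤ t n * (T1 + u (n+1) * b (n+1)
            + ∑ k ∈ Finset.range n, |u (k+2) - u (k+1)| * b (k+1)) :=
          mul_le_mul_of_nonneg_left (hSnorm n) htpos.le
      _ ≤ (4*2^τ/((n:ℝ) * L^τ)) * (T1 + K₁ * ((n:ℝ)^(γ-ρ) * L^(τ + (1+δ)/2))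
            + (C₁ + K₂ * ((n:ℝ)^(γ-ρ) * L^(τ + (1+δ)/2)))) := by
          apply mul_le_mul htb (by linarith) _
            (div_nonneg (by positivity) (mul_nonneg hn0.le hLτ0.le))
          have := hSnorm n
          have h0 : 0 ≤ ∑ k ∈ Finset.range n, |u (k+2) - u (k+1)| * b (k+1) :=
            Finset.sum_nonneg fun k _ => mul_nonneg (abs_nonneg _) (hb_nonneg _)
          have h1 : 0 ≤ u (n+1) * b (n+1) := mul_nonneg (hu_nonneg _) (hb_nonneg _)
          linarith [frob_nonneg (∑ k ∈ Finset.range (n+1), u (k+1) • (B k - B (k+1)))]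
      _ = 4*2^τ*(T1 + C₁) * (1/((n:ℝ)*L^τ))
            + 4*2^τ*(K₁ + K₂) * ((n:ℝ)^(γ-ρ) * L^(τ + (1+δ)/2) / ((n:ℝ)*L^τ)) := by
          ring
      _ ≤ 4*2^τ*(T1 + C₁) * ((n:ℝ)^(γ-1-ρ) * L^((1+δ)/2))
            + 4*2^τ*(K₁ + K₂) * ((n:ℝ)^(γ-1-ρ) * L^((1+δ)/2)) := by
          rw [hE2]
          have : 4*2^τ*(T1 + C₁) * (1/((n:ℝ)*L^τ))
              ≤ 4*2^τ*(T1 + C₁) * ((n:ℝ)^(γ-1-ρ) * L^((1+δ)/2)) :=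
            mul_le_mul_of_nonneg_left hE1 (mul_nonneg (by positivity) (by linarith))
          linarith
      _ = 4*(2:ℝ)^τ*(T1 + C₁ + K₁ + K₂) * ((n:ℝ)^(γ-1-ρ) * L^((1+δ)/2)) := by ring
  rw [Real.norm_eq_abs, Real.norm_eq_abs, abs_of_nonneg (frob_nonneg _), abs_of_nonneg hwnn]
  simpa only [hB] using hmain
end
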